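/- arXiv:2101.09443 — 10 statements merged into one kernel-verified Lean document; each statement's English description precedes it below -/
import Mathlib

section
/- If u₊²(ρ₊+n₊) > A₁γρ₊^γ + A₂αn₊^α (supersonic case M₊>1), then the multiset of complex eigenvalues of J₊ consists of one real eigenvalue λ₃ > 0 together with two eigenvalues λ₁, λ₂ satisfying Re λ₁ < 0 and Re λ₂ < 0. -/
/-!
With `a = (ρ₊u₊² - A₁γρ₊^γ)/(μu₊)`, `b = n₊/μ` and `d = (n₊u₊² - A₂αn₊^α)/(n₊u₊)` the
characteristic polynomial of `J₊` is `q = X³ - (a + d)X² + (ad - 1 - b)X + (a + bd)`, and the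
supersonic condition says exactly that `q(0) = a + bd < 0`. When `a + d > 0` also
`q(a + d) < 0`, so `q` has a real root `t > max 0 (a + d)`. The cofactor
`X² + (t - a - d)X + p` then has positive coefficients, since `t p = -(a + bd)`, and a real
quadratic with positive coefficients has both roots in the open left half-plane.
-/

open Polynomial Matrix

/-- The matrix `J₊` from the linearization of the steady-state system. -/
noncomputable def Jplus (A₁ A₂ γ α μ ρp np up : ℝ) : Matrix (Fin 3) (Fin 3) ℝ :=
  !![0, 1, 0;
     np / μ, (ρp * up ^ 2 - A₁ * γ * ρp ^ γ) / (μ * up), -(np / μ);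
     (ρp * up ^ 2 - A₁ * γ * ρp ^ γ) / (np * up), -(μ / np),
       (np * up ^ 2 - A₂ * α * np ^ α) / (np * up)]

lemma Polynomial.exists_gt_isRoot_of_eval_neg {q : ℝ[X]} (hdeg : 0 < q.degree)
    (hlead : 0 < q.leadingCoeff) {x : ℝ} (hx : q.eval x < 0) : ∃ t, x < t ∧ q.IsRoot t := by
  have hlarge := (q.tendsto_atTop_of_leadingCoeff_nonneg hdeg hlead.le).eventually_gt_atTop 0
  obtain ⟨M, hM, hxM⟩ := (hlarge.and (Filter.eventually_ge_atTop x)).exists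
  obtain ⟨t, ⟨hxt, -⟩, ht⟩ := intermediate_value_Ioo hxM q.continuous.continuousOn ⟨hx, hM⟩
  exact ⟨t, hxt, ht⟩

lemma Complex.re_neg_of_sq_add_mul_add_eq_zero {s p : ℝ} (hs : 0 < s) (hp : 0 < p) {z : ℂ}
    (hz : z ^ 2 + s * z + p = 0) : z.re < 0 := by
  have hre : z.re ^ 2 - z.im ^ 2 + s * z.re + p = 0 := by
    simpa [sq] using congrArg Complex.re hz
  have him : z.im * (2 * z.re + s) = 0 := by
    have h := congrArg Complex.im hz
    simp only [sq, add_im, mul_im, ofReal_re, ofReal_im, zero_im] at h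
    linear_combination h
  rcases mul_eq_zero.mp him with him0 | hcentre
  · nlinarith
  · linarith

lemma exists_roots_quadratic_eq_of_pos {s p : ℝ} (hs : 0 < s) (hp : 0 < p) :
    ∃ l₁ l₂ : ℂ, (X ^ 2 + C (s : ℂ) * X + C (p : ℂ)).roots = {l₁, l₂} ∧
      l₁.re < 0 ∧ l₂.re < 0 := by
  set Q : ℂ[X] := X ^ 2 + C (s : ℂ) * X + C (p : ℂ) with hQ
  have hdeg : Q.natDegree = 2 := by rw [hQ]; compute_degree!
  have hQ0 : Q ≠ 0 := by rintro h; simp [h] at hdeg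
  have hre : ∀ z ∈ Q.roots, z.re < 0 := fun z hz ↦
    Complex.re_neg_of_sq_add_mul_add_eq_zero hs hp (by simpa [hQ] using (mem_roots hQ0).mp hz)
  obtain ⟨l₁, l₂, hl⟩ :=
    Multiset.card_eq_two.mp (IsAlgClosed.card_roots_eq_natDegree.trans hdeg)
  exact ⟨l₁, l₂, hl, hre _ (by simp [hl]), hre _ (by simp [hl])⟩

lemma cubic_eq_X_sub_C_mul {R : Type*} [CommRing R] {c₂ c₁ c₀ t : R}
    (ht : t ^ 3 + c₂ * t ^ 2 + c₁ * t + c₀ = 0) :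
    X ^ 3 + C c₂ * X ^ 2 + C c₁ * X + C c₀ =
      (X - C t) * (X ^ 2 + C (c₂ + t) * X + C (c₁ + t * (c₂ + t))) := by
  have h : C (t ^ 3 + c₂ * t ^ 2 + c₁ * t + c₀) = 0 := by rw [ht, C_0]
  simp only [map_add, map_mul, map_pow] at h ⊢
  linear_combination h

theorem exists_roots_cubic_eq_of_const_neg {c₂ c₁ c₀ : ℝ} (hc₀ : c₀ < 0)
    (hc : 0 < -c₂ → c₀ < c₁ * c₂) :
    ∃ l₁ l₂ l₃ : ℂ,
      ((X ^ 3 + C c₂ * X ^ 2 + C c₁ * X + C c₀).map Complex.ofRealHom).roots = {l₁, l₂, l₃} ∧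
      l₁.re < 0 ∧ l₂.re < 0 ∧ l₃.im = 0 ∧ 0 < l₃.re := by
  set q : ℝ[X] := X ^ 3 + C c₂ * X ^ 2 + C c₁ * X + C c₀ with hq
  have heval (x : ℝ) : q.eval x = x ^ 3 + c₂ * x ^ 2 + c₁ * x + c₀ := by simp [hq]
  have hneg : q.eval (max 0 (-c₂)) < 0 := by
    by_cases h : 0 < -c₂
    · rw [max_eq_right h.le, heval]; linarith [hc h]
    · rw [max_eq_left (not_lt.mp h), heval]; simpa using hc₀
  have hdeg : q.degree = 3 := by rw [hq]; compute_degree!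
  have hmonic : q.Monic := by rw [hq]; monicity!
  obtain ⟨t, hlt, ht⟩ := exists_gt_isRoot_of_eval_neg (by rw [hdeg]; norm_num)
    (by rw [hmonic.leadingCoeff]; norm_num) hneg
  rw [max_lt_iff] at hlt
  rw [IsRoot, heval] at ht
  have hp : 0 < c₁ + t * (c₂ + t) := by nlinarith
  obtain ⟨l₁, l₂, hroots, h₁, h₂⟩ := exists_roots_quadratic_eq_of_pos (s := c₂ + t) (by linarith) hp
  refine ⟨l₁, l₂, t, ?_, h₁, h₂, Complex.ofReal_im t, by simpa using hlt.1⟩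
  have hmap : (X ^ 2 + C (c₂ + t) * X + C (c₁ + t * (c₂ + t))).map Complex.ofRealHom =
      X ^ 2 + C ((c₂ + t : ℝ) : ℂ) * X + C ((c₁ + t * (c₂ + t) : ℝ) : ℂ) := by
    simp only [Polynomial.map_add, Polynomial.map_mul, Polynomial.map_pow, map_X, map_C,
      Complex.ofRealHom_eq_coe]
  have hQ0 : X ^ 2 + C ((c₂ + t : ℝ) : ℂ) * X + C ((c₁ + t * (c₂ + t) : ℝ) : ℂ) ≠ 0 := by
    rintro h; rw [h, roots_zero] at hroots; simp at hroots
  rw [hq, cubic_eq_X_sub_C_mul ht, Polynomial.map_mul, hmap, Polynomial.map_sub, map_X, map_C,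
    Complex.ofRealHom_eq_coe, roots_mul (mul_ne_zero (X_sub_C_ne_zero _) hQ0), hroots,
    roots_X_sub_C, add_comm]
  rfl

noncomputable def reducedJplus (a b d : ℝ) : Matrix (Fin 3) (Fin 3) ℝ :=
  !![0, 1, 0;
     b, a, -b;
     a / b, -b⁻¹, d]

lemma charpoly_reducedJplus {a b d : ℝ} (hb : b ≠ 0) :
    (reducedJplus a b d).charpoly =
      X ^ 3 + C (-(a + d)) * X ^ 2 + C (a * d - 1 - b) * X + C (a + b * d) := by
  have h₁ : C b * C b⁻¹ = (1 : ℝ[X]) := by rw [← C_mul, mul_inv_cancel₀ hb, C_1]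
  have h₂ : C b * C (a / b) = C a := by rw [← C_mul, mul_div_cancel₀ _ hb]
  rw [Matrix.charpoly, Matrix.det_fin_three]
  simp [reducedJplus]
  linear_combination h₂ - (X : ℝ[X]) * h₁

lemma Jplus_eq_reducedJplus (A₁ A₂ γ α : ℝ) {μ ρp np up : ℝ} (hμ : μ ≠ 0) (hn : np ≠ 0) :
    Jplus A₁ A₂ γ α μ ρp np up =
      reducedJplus ((ρp * up ^ 2 - A₁ * γ * ρp ^ γ) / (μ * up)) (np / μ)
        ((np * up ^ 2 - A₂ * α * np ^ α) / (np * up)) := by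
  ext i j
  fin_cases i <;> fin_cases j <;> simp [Jplus, reducedJplus]; field_simp

lemma add_mul_lt_sub_sub_mul_neg_add {a b d : ℝ} (hb : 0 < b) (h₀ : a + b * d < 0)
    (h₂ : 0 < a + d) : a + b * d < (a * d - 1 - b) * -(a + d) := by
  -- `(a + d) (a + b d) = a² + b d² + (1 + b) a d < 0` forces `a d < 0`
  have had : a * d < 0 := by
    by_contra! h
    nlinarith [mul_neg_of_pos_of_neg h₂ h₀, sq_nonneg a, mul_nonneg hb.le (sq_nonneg d),
      mul_nonneg h (by linarith : (0 : ℝ) ≤ 1 + b)]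
  nlinarith [mul_neg_of_neg_of_pos had h₂, mul_pos (by linarith : (0 : ℝ) < 1 + b) h₂]

theorem exists_roots_charpoly_reducedJplus {a b d : ℝ} (hb : 0 < b) (h₀ : a + b * d < 0) :
    ∃ l₁ l₂ l₃ : ℂ, ((reducedJplus a b d).map Complex.ofReal).charpoly.roots = {l₁, l₂, l₃} ∧
      l₁.re < 0 ∧ l₂.re < 0 ∧ l₃.im = 0 ∧ 0 < l₃.re := by
  have h := charpoly_map (reducedJplus a b d) Complex.ofRealHom
  rw [charpoly_reducedJplus hb.ne'] at h
  exact h ▸ exists_roots_cubic_eq_of_const_neg h₀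
    (fun h₂ ↦ add_mul_lt_sub_sub_mul_neg_add hb h₀ (by linarith))

theorem stmt1_general (A₁ A₂ γ α μ ρp np up : ℝ)
    (hμ : 0 < μ) (hn : 0 < np) (hu : up < 0)
    (hsup : A₁ * γ * ρp ^ γ + A₂ * α * np ^ α < up ^ 2 * (ρp + np)) :
    ∃ l₁ l₂ l₃ : ℂ,
      ((Jplus A₁ A₂ γ α μ ρp np up).map Complex.ofReal).charpoly.roots = {l₁, l₂, l₃} ∧
      l₁.re < 0 ∧ l₂.re < 0 ∧ l₃.im = 0 ∧ 0 < l₃.re := by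
  rw [Jplus_eq_reducedJplus A₁ A₂ γ α hμ.ne' hn.ne']
  refine exists_roots_charpoly_reducedJplus (div_pos hn hμ) ?_
  have hpos : 0 < ρp * up ^ 2 - A₁ * γ * ρp ^ γ + (np * up ^ 2 - A₂ * α * np ^ α) := by
    linarith
  calc _ = (ρp * up ^ 2 - A₁ * γ * ρp ^ γ + (np * up ^ 2 - A₂ * α * np ^ α)) / (μ * up) := by
        field_simp
    _ < 0 := div_neg_of_pos_of_neg hpos (mul_neg_of_pos_of_neg hμ hu)

/-- in the supersonic case `M₊ > 1`, the eigenvalues of `J₊`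
consist of one positive real eigenvalue and two eigenvalues with negative
real parts. -/
theorem stmt1 (A₁ A₂ γ α μ ρp np up : ℝ)
    (hA₁ : 0 < A₁) (hA₂ : 0 < A₂) (hγ : 1 ≤ γ) (hα : 1 ≤ α) (hμ : 0 < μ)
    (hρ : 0 < ρp) (hn : 0 < np) (hu : up < 0)
    (hsup : A₁ * γ * ρp ^ γ + A₂ * α * np ^ α < up ^ 2 * (ρp + np)) :
    ∃ l₁ l₂ l₃ : ℂ,
      ((Jplus A₁ A₂ γ α μ ρp np up).map Complex.ofReal).charpoly.roots = {l₁, l₂, l₃} ∧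
      l₁.re < 0 ∧ l₂.re < 0 ∧ l₃.im = 0 ∧ 0 < l₃.re :=
  stmt1_general A₁ A₂ γ α μ ρp np up hμ hn hu hsup
end

section
/- If u₊²(ρ₊+n₊) < A₁γρ₊^γ + A₂αn₊^α (subsonic case M₊<1), then the multiset of complex eigenvalues of J₊ consists of one real eigenvalue λ₃ < 0 together with two eigenvalues λ₁, λ₂ satisfying Re λ₁ > 0 and Re λ₂ > 0. -/
open Polynomial Matrix

/-!
`J₊` has the shape `!![0, 1, 0; b, a, -b; a * m, -m, d]` with `b, m > 0`, so its characteristic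
polynomial is `X³ - (a + d) X² + (a d - b m - b) X + f` with `f = b (a m + d)`. The subsonic
condition says exactly that `a m + d > 0`, i.e. `f > 0`, and it forces `a d ≤ 0`, so the
`X`-coefficient is negative whenever the trace `a + d` is nonpositive. For such a real cubic the
intermediate value theorem gives a real root `l < min (a + d) 0`; the remaining two roots then have
positive sum `a + d - l` and positive product `-f / l`, and two complex numbers with positive real
sum and product both have positive real part.
-/

lemma charpoly_map_ofReal_eq (a b c d m : ℝ) :
    ((!![0, 1, 0; b, a, -b; c, -m, d]).map Complex.ofReal).charpoly =
      X ^ 3 - C ((a + d : ℝ) : ℂ) * X ^ 2 + C ((a * d - b * m - b : ℝ) : ℂ) * X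
        + C ((b * (c + d) : ℝ) : ℂ) := by
  rw [Matrix.charpoly, Matrix.det_fin_three]
  simp [charmatrix_apply_eq, charmatrix_apply_ne]
  ring

lemma roots_cubic_eq_of_vieta {s e f l₁ l₂ l₃ : ℂ} (hs : s = l₁ + l₂ + l₃)
    (he : e = l₁ * l₂ + l₁ * l₃ + l₂ * l₃) (hf : f = -(l₁ * l₂ * l₃)) :
    (X ^ 3 - C s * X ^ 2 + C e * X + C f).roots = {l₁, l₂, l₃} := by
  have hprod : X ^ 3 - C s * X ^ 2 + C e * X + C f
      = (({l₁, l₂, l₃} : Multiset ℂ).map fun a => X - C a).prod := by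
    simp only [Multiset.insert_eq_cons, Multiset.map_cons, Multiset.prod_cons,
      Multiset.map_singleton, Multiset.prod_singleton, hs, he, hf, C_add, C_mul, C_neg]
    ring
  rw [hprod, roots_multiset_prod_X_sub_C]

lemma Complex.re_pos_of_mul_sub_eq {σ q : ℝ} (hσ : 0 < σ) (hq : 0 < q) {z : ℂ}
    (h : z * (σ - z) = q) : 0 < z.re := by
  have hre := congrArg Complex.re h
  have him := congrArg Complex.im h
  simp only [Complex.mul_re, Complex.mul_im, Complex.sub_re, Complex.sub_im,
    Complex.ofReal_re, Complex.ofReal_im] at hre him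
  by_contra! hz
  rcases mul_eq_zero.1 (show z.im * (σ - 2 * z.re) = 0 by linarith) with hy | hx
  · rw [hy] at hre; nlinarith
  · linarith

lemma exists_add_eq_mul_eq_re_pos {σ q : ℝ} (hσ : 0 < σ) (hq : 0 < q) :
    ∃ z₁ z₂ : ℂ, z₁ + z₂ = σ ∧ z₁ * z₂ = q ∧ 0 < z₁.re ∧ 0 < z₂.re := by
  obtain ⟨w, hw⟩ := IsAlgClosed.exists_pow_nat_eq ((σ ^ 2 - 4 * q : ℝ) : ℂ) two_pos
  push_cast at hw
  refine ⟨(σ + w) / 2, (σ - w) / 2, by ring, by linear_combination (-1 / 4 : ℂ) * hw,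
    Complex.re_pos_of_mul_sub_eq hσ hq ?_, Complex.re_pos_of_mul_sub_eq hσ hq ?_⟩ <;>
  linear_combination (-1 / 4 : ℂ) * hw

lemma exists_lt_cubic_neg (s e f R : ℝ) : ∃ x < R, x ^ 3 - s * x ^ 2 + e * x + f < 0 := by
  set r := 1 + |s| + |e| + |f| + |R|
  have hr : 1 ≤ r := by
    simp only [r]; linarith [abs_nonneg s, abs_nonneg e, abs_nonneg f, abs_nonneg R]
  refine ⟨-r, by linarith [neg_abs_le R, abs_nonneg s, abs_nonneg e, abs_nonneg f], ?_⟩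
  have hs : -s * r ^ 2 ≤ |s| * r ^ 2 := by gcongr; exact neg_le_abs s
  have he : -e * r ≤ |e| * r ^ 2 := by
    calc -e * r ≤ |e| * r := by gcongr; exact neg_le_abs e
      _ ≤ |e| * r ^ 2 := by gcongr; nlinarith
  have hf : f ≤ |f| * r ^ 2 :=
    (le_abs_self f).trans (le_mul_of_one_le_right (abs_nonneg f) (by nlinarith))
  nlinarith [abs_nonneg R]

lemma exists_cubic_root_lt_min (s e f : ℝ) (hf : 0 < f) (hse : s ≤ 0 → e ≤ 0) :
    ∃ l < min s 0, l ^ 3 - s * l ^ 2 + e * l + f = 0 := by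
  have hR : 0 < (min s 0) ^ 3 - s * (min s 0) ^ 2 + e * min s 0 + f := by
    rcases le_or_gt s 0 with hs | hs
    · rw [min_eq_left hs]; nlinarith [hse hs]
    · rw [min_eq_right hs.le]; simpa using hf
  obtain ⟨x, hx, hpx⟩ := exists_lt_cubic_neg s e f (min s 0)
  obtain ⟨l, hl, hpl⟩ :=
    intermediate_value_Ioo (f := fun x => x ^ 3 - s * x ^ 2 + e * x + f) hx.le (by fun_prop)
      ⟨hpx, hR⟩
  exact ⟨l, hl.2, hpl⟩

lemma exists_roots_cubic_re_pos_re_pos_neg (s e f : ℝ) (hf : 0 < f) (hse : s ≤ 0 → e ≤ 0) :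
    ∃ l₁ l₂ l₃ : ℂ,
      (X ^ 3 - C (s : ℂ) * X ^ 2 + C (e : ℂ) * X + C (f : ℂ)).roots = {l₁, l₂, l₃} ∧
      0 < l₁.re ∧ 0 < l₂.re ∧ l₃.im = 0 ∧ l₃.re < 0 := by
  obtain ⟨l, hl, hpl⟩ := exists_cubic_root_lt_min s e f hf hse
  have hl0 : l < 0 := hl.trans_le (min_le_right s 0)
  have hls : l < s := hl.trans_le (min_le_left s 0)
  obtain ⟨q, hq, hql⟩ : ∃ q : ℝ, 0 < q ∧ q * l = -f :=
    ⟨-f / l, div_pos_of_neg_of_neg (neg_neg_of_pos hf) hl0, div_mul_cancel₀ _ hl0.ne⟩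
  have he : e = q + (s - l) * l := mul_right_cancel₀ hl0.ne (by linear_combination hpl - hql)
  obtain ⟨z₁, z₂, hadd, hmul, hz₁, hz₂⟩ := exists_add_eq_mul_eq_re_pos (sub_pos.2 hls) hq
  push_cast at hadd
  have hqlC : (q : ℂ) * l = -f := by exact_mod_cast hql
  refine ⟨z₁, z₂, l, roots_cubic_eq_of_vieta ?_ ?_ ?_, hz₁, hz₂, Complex.ofReal_im l,
    by simpa⟩
  · linear_combination -hadd
  · rw [he]; push_cast; linear_combination -hmul - l * hadd
  · linear_combination l * hmul + hqlC

lemma mul_nonpos_of_add_nonpos_of_mul_add_pos {a d m : ℝ} (hm : 0 < m) (hamd : 0 < a * m + d)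
    (had : a + d ≤ 0) : a * d ≤ 0 := by
  rcases le_or_gt 0 a with ha | ha
  · exact mul_nonpos_of_nonneg_of_nonpos ha (by linarith)
  · exact (mul_neg_of_neg_of_pos ha (by nlinarith)).le

theorem stmt2_general (A₁ A₂ γ α μ ρp np up : ℝ)
    (hμ : 0 < μ) (hn : 0 < np) (hu : up < 0)
    (hsub : up ^ 2 * (ρp + np) < A₁ * γ * ρp ^ γ + A₂ * α * np ^ α) :
    ∃ l₁ l₂ l₃ : ℂ,
      ((Jplus A₁ A₂ γ α μ ρp np up).map Complex.ofReal).charpoly.roots = {l₁, l₂, l₃} ∧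
      0 < l₁.re ∧ 0 < l₂.re ∧ l₃.im = 0 ∧ l₃.re < 0 := by
  set a := (ρp * up ^ 2 - A₁ * γ * ρp ^ γ) / (μ * up)
  set c := (ρp * up ^ 2 - A₁ * γ * ρp ^ γ) / (np * up)
  set d := (np * up ^ 2 - A₂ * α * np ^ α) / (np * up)
  have hb : 0 < np / μ := by positivity
  have hm : 0 < μ / np := by positivity
  have hc : c = a * (μ / np) := by
    simp only [a, c]; field_simp
  have hcd : 0 < c + d := by
    simp only [c, d, ← add_div]
    exact div_pos_of_neg_of_neg (by linarith) (mul_neg_of_pos_of_neg hn hu)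
  rw [show Jplus A₁ A₂ γ α μ ρp np up = !![0, 1, 0; np / μ, a, -(np / μ); c, -(μ / np), d]
    from rfl, charpoly_map_ofReal_eq]
  refine exists_roots_cubic_re_pos_re_pos_neg _ _ _ (mul_pos hb hcd) fun had => ?_
  linarith [mul_nonpos_of_add_nonpos_of_mul_add_pos hm (hc ▸ hcd) had, mul_pos hb hm]

/-- in the subsonic case `M₊ < 1`, the eigenvalues of `J₊`
consist of one negative real eigenvalue and two eigenvalues with positive
real parts. -/
theorem stmt2 (A₁ A₂ γ α μ ρp np up : ℝ)
    (hA₁ : 0 < A₁) (hA₂ : 0 < A₂) (hγ : 1 ≤ γ) (hα : 1 ≤ α) (hμ : 0 < μ)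
    (hρ : 0 < ρp) (hn : 0 < np) (hu : up < 0)
    (hsub : up ^ 2 * (ρp + np) < A₁ * γ * ρp ^ γ + A₂ * α * np ^ α) :
    ∃ l₁ l₂ l₃ : ℂ,
      ((Jplus A₁ A₂ γ α μ ρp np up).map Complex.ofReal).charpoly.roots = {l₁, l₂, l₃} ∧
      0 < l₁.re ∧ 0 < l₂.re ∧ l₃.im = 0 ∧ l₃.re < 0 :=
  stmt2_general A₁ A₂ γ α μ ρp np up hμ hn hu hsub
end

section
/- If u₊²(ρ₊+n₊) = A₁γρ₊^γ + A₂αn₊^α (sonic case M₊=1), then all three eigenvalues of J₊ are real, and they can be listed as λ₁ > 0, λ₂ < 0, and λ₃ = 0. -/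
/-!
In the sonic case the entry `(2, 0)` of `J₊` is minus the entry `(2, 2)`, which kills the
constant term of the characteristic polynomial: `0` is an eigenvalue and the other two are the
roots of `X² - (a + e) X + (a e - b d - b)`, with `a, b, d, e` the remaining entries.
Here `b d = 1`, `b > 0` and `a e = -P² / (μ n u²) ≤ 0` for `P = ρ u² - A₁ γ ρ^γ`, so the
product of these two roots is negative: they are real, one positive and one negative.
-/

open Polynomial Matrix

lemma exists_pos_neg_of_add_of_mul {s q : ℝ} (hq : q < 0) :
    ∃ l₁ l₂ : ℝ, l₁ + l₂ = s ∧ l₁ * l₂ = q ∧ 0 < l₁ ∧ l₂ < 0 := by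
  set r := √(s ^ 2 - 4 * q)
  have hr : r ^ 2 = s ^ 2 - 4 * q := Real.sq_sqrt (by nlinarith)
  have hsr : s < r := Real.lt_sqrt_of_sq_lt (by linarith)
  have hsr' : -s < r := Real.lt_sqrt_of_sq_lt (by linarith)
  exact ⟨(s + r) / 2, (s - r) / 2, by ring, by linear_combination -hr / 4, by linarith,
    by linarith⟩

lemma charpoly_fin_three_eq_X_mul {R : Type*} [CommRing R] (a b d e : R) :
    (!![0, 1, 0; b, a, -b; -e, -d, e] : Matrix (Fin 3) (Fin 3) R).charpoly =
      X * (X ^ 2 - C (a + e) * X + C (a * e - b * d - b)) := by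
  rw [charpoly, det_fin_three]
  simp only [Fin.isValue, charmatrix_apply_eq, of_apply, cons_val', cons_val_zero,
    cons_val_fin_one, map_zero, sub_zero, cons_val_one, cons_val, ne_eq, Fin.reduceEq,
    not_false_eq_true, charmatrix_apply_ne, map_neg, neg_neg, X_mul_C, zero_ne_one, map_one,
    one_ne_zero, mul_neg, neg_mul, one_mul, neg_zero, zero_mul, add_zero, map_add, map_sub, map_mul]
  ring

lemma X_sq_sub_C_add_mul_X_add_C_mul {R : Type*} [CommRing R] (x y : R) :
    (X ^ 2 - C (x + y) * X + C (x * y) : R[X]) = (X - C x) * (X - C y) := by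
  rw [C_add, C_mul]
  ring

lemma roots_X_mul_X_sub_C_mul_X_sub_C {R : Type*} [CommRing R] [IsDomain R] (x y : R) :
    (X * ((X - C x) * (X - C y))).roots = {x, y, 0} := by
  rw [roots_mul (mul_ne_zero X_ne_zero (mul_ne_zero (X_sub_C_ne_zero x) (X_sub_C_ne_zero y))),
    roots_mul (mul_ne_zero (X_sub_C_ne_zero x) (X_sub_C_ne_zero y)), roots_X,
    roots_X_sub_C, roots_X_sub_C]
  simp only [Multiset.insert_eq_cons, ← Multiset.singleton_add]
  abel

lemma Jplus_eq_of_sonic {A₁ A₂ γ α μ ρp np up : ℝ}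
    (hson : up ^ 2 * (ρp + np) = A₁ * γ * ρp ^ γ + A₂ * α * np ^ α) :
    let P := ρp * up ^ 2 - A₁ * γ * ρp ^ γ
    Jplus A₁ A₂ γ α μ ρp np up =
      !![0, 1, 0;
         np / μ, P / (μ * up), -(np / μ);
         -(-P / (np * up)), -(μ / np), -P / (np * up)] := by
  have hQ : np * up ^ 2 - A₂ * α * np ^ α = -(ρp * up ^ 2 - A₁ * γ * ρp ^ γ) := by
    linear_combination hson
  simp only [Jplus, hQ, neg_div, neg_neg]

lemma div_mul_neg_div_nonpos {μ n : ℝ} (hμ : 0 < μ) (hn : 0 < n) (x y : ℝ) :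
    x / (μ * y) * (-x / (n * y)) ≤ 0 := by
  have h : x / (μ * y) * (-x / (n * y)) = -((x / y) ^ 2 / (μ * n)) := by ring
  rw [h, neg_nonpos]
  positivity

theorem stmt3_general (A₁ A₂ γ α μ ρp np up : ℝ)
    (hμ : 0 < μ) (hn : 0 < np)
    (hson : up ^ 2 * (ρp + np) = A₁ * γ * ρp ^ γ + A₂ * α * np ^ α) :
    ∃ l₁ l₂ : ℝ,
      ((Jplus A₁ A₂ γ α μ ρp np up).map Complex.ofReal).charpoly.roots =
        {(l₁ : ℂ), (l₂ : ℂ), 0} ∧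
      0 < l₁ ∧ l₂ < 0 := by
  set P := ρp * up ^ 2 - A₁ * γ * ρp ^ γ
  set a := P / (μ * up)
  set e := -P / (np * up)
  have hbd : np / μ * (μ / np) = 1 := by
    rw [div_mul_div_cancel₀ hμ.ne', div_self hn.ne']
  have hq : a * e - np / μ * (μ / np) - np / μ < 0 := by
    have hae : a * e ≤ 0 := div_mul_neg_div_nonpos hμ hn P up
    have hb : 0 < np / μ := div_pos hn hμ
    linarith
  obtain ⟨l₁, l₂, hsum, hprod, hl₁, hl₂⟩ := exists_pos_neg_of_add_of_mul (s := a + e) hq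
  have hchar : (Jplus A₁ A₂ γ α μ ρp np up).charpoly = X * ((X - C l₁) * (X - C l₂)) := by
    rw [Jplus_eq_of_sonic hson, charpoly_fin_three_eq_X_mul, ← hsum, ← hprod,
      X_sq_sub_C_add_mul_X_add_C_mul]
  refine ⟨l₁, l₂, ?_, hl₁, hl₂⟩
  rw [show Complex.ofReal = Complex.ofRealHom from rfl, charpoly_map, hchar]
  simpa using roots_X_mul_X_sub_C_mul_X_sub_C (l₁ : ℂ) l₂

/-- in the sonic case `M₊ = 1`, all three eigenvalues of `J₊`
are real and can be listed as `λ₁ > 0`, `λ₂ < 0` and `λ₃ = 0`. -/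
theorem stmt3 (A₁ A₂ γ α μ ρp np up : ℝ)
    (hA₁ : 0 < A₁) (hA₂ : 0 < A₂) (hγ : 1 ≤ γ) (hα : 1 ≤ α) (hμ : 0 < μ)
    (hρ : 0 < ρp) (hn : 0 < np) (hu : up < 0)
    (hson : up ^ 2 * (ρp + np) = A₁ * γ * ρp ^ γ + A₂ * α * np ^ α) :
    ∃ l₁ l₂ : ℝ,
      ((Jplus A₁ A₂ γ α μ ρp np up).map Complex.ofReal).charpoly.roots =
        {(l₁ : ℂ), (l₂ : ℂ), 0} ∧
      0 < l₁ ∧ l₂ < 0 :=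
  stmt3_general A₁ A₂ γ α μ ρp np up hμ hn hson
end

section
/- The vector (1, 0, 1)ᵀ lies in the kernel of J₊ if and only if (ρ₊+n₊)u₊² = A₁γρ₊^γ + A₂αn₊^α (the sonic condition M₊ = 1). -/
open Matrix

theorem Jplus_mulVec_one_zero_one (A₁ A₂ γ α μ ρp np up : ℝ) :
    Jplus A₁ A₂ γ α μ ρp np up *ᵥ ![1, 0, 1] =
      ![0, 0, ((ρp + np) * up ^ 2 - (A₁ * γ * ρp ^ γ + A₂ * α * np ^ α)) / (np * up)] := by
  ext i
  fin_cases i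
  · simp [Jplus]
  · simp [Jplus]
  · simp [Jplus, mulVec, dotProduct, Fin.sum_univ_three]
    ring

theorem vecCons_zero_zero_eq_zero_iff {R : Type*} [Zero R] {x : R} : ![0, 0, x] = 0 ↔ x = 0 := by
  simp [← Matrix.cons_zero_zero, Matrix.vecCons_inj]

theorem stmt4_general (A₁ A₂ γ α μ ρp np up : ℝ)
    (hn : 0 < np) (hu : up < 0) :
    (Jplus A₁ A₂ γ α μ ρp np up).mulVec ![1, 0, 1] = 0 ↔
      (ρp + np) * up ^ 2 = A₁ * γ * ρp ^ γ + A₂ * α * np ^ α := by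
  rw [Jplus_mulVec_one_zero_one, vecCons_zero_zero_eq_zero_iff,
    div_eq_zero_iff, or_iff_left (mul_ne_zero hn.ne' hu.ne), sub_eq_zero]

/-- `(1,0,1)ᵀ` lies in the kernel of `J₊` iff the sonic
condition `(ρ₊+n₊)u₊² = A₁γρ₊^γ + A₂αn₊^α` holds. -/
theorem stmt4 (A₁ A₂ γ α μ ρp np up : ℝ)
    (hA₁ : 0 < A₁) (hA₂ : 0 < A₂) (hγ : 1 ≤ γ) (hα : 1 ≤ α) (hμ : 0 < μ)
    (hρ : 0 < ρp) (hn : 0 < np) (hu : up < 0) :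
    (Jplus A₁ A₂ γ α μ ρp np up).mulVec ![1, 0, 1] = 0 ↔
      (ρp + np) * up ^ 2 = A₁ * γ * ρp ^ γ + A₂ * α * np ^ α :=
  stmt4_general A₁ A₂ γ α μ ρp np up hn hu
end

section
/- If u₊²(ρ₊+n₊) > A₁γρ₊^γ + A₂αn₊^α (supersonic case M₊>1), then the symmetric matrix M₃ is positive definite. -/
/-!
Writing `P = A₁γρ₊^{γ-2}`, `Q = A₂αn₊^{α-2}` and `w = -u₊ > 0`, the matrix `M₃` is the arrow matrix
`[[wP, 0, -Pρ₊], [0, wQ, -Qn₊], [-Pρ₊, -Qn₊, w(ρ₊+n₊)]]`. Completing the squares in the first two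
coordinates leaves the Schur complement `(w²(ρ₊+n₊) - Pρ₊² - Qn₊²) / w`, and
`Pρ₊² + Qn₊² = A₁γρ₊^γ + A₂αn₊^α`, so its positivity is exactly the supersonic condition.
-/

open Matrix

/-- The symmetric matrix `M₃` appearing in the basic weighted energy estimate. -/
noncomputable def M3 (A₁ A₂ γ α ρp np up : ℝ) : Matrix (Fin 3) (Fin 3) ℝ :=
  !![-(A₁ * γ * ρp ^ (γ - 2) * up), 0, -(A₁ * γ * ρp ^ (γ - 1));
     0, -(A₂ * α * np ^ (α - 2) * up), -(A₂ * α * np ^ (α - 1));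
     -(A₁ * γ * ρp ^ (γ - 1)), -(A₂ * α * np ^ (α - 1)), -((ρp + np) * up)]

theorem Matrix.posDef_arrow_fin_three {d₁ d₂ b₁ b₂ c : ℝ} (hd₁ : 0 < d₁) (hd₂ : 0 < d₂)
    (hdet : d₂ * b₁ ^ 2 + d₁ * b₂ ^ 2 < d₁ * d₂ * c) :
    (!![d₁, 0, b₁; 0, d₂, b₂; b₁, b₂, c] : Matrix (Fin 3) (Fin 3) ℝ).PosDef := by
  rw [posDef_iff_dotProduct_mulVec]
  refine ⟨by ext i j; fin_cases i <;> fin_cases j <;> rfl, fun v hv ↦ ?_⟩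
  have hquad : d₁ * d₂ * (star v ⬝ᵥ (!![d₁, 0, b₁; 0, d₂, b₂; b₁, b₂, c] *ᵥ v)) =
      d₂ * (d₁ * v 0 + b₁ * v 2) ^ 2 + d₁ * (d₂ * v 1 + b₂ * v 2) ^ 2 +
        (d₁ * d₂ * c - d₂ * b₁ ^ 2 - d₁ * b₂ ^ 2) * v 2 ^ 2 := by
    simp only [dotProduct, Pi.star_apply, star_trivial, mulVec, of_apply, cons_val',
      cons_val_fin_one, Fin.sum_univ_three, cons_val_zero, cons_val_one, cons_val, zero_mul,
      add_zero, zero_add]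
    ring
  refine pos_of_mul_pos_right (hquad ▸ ?_) (mul_pos hd₁ hd₂).le
  by_cases hz : v 2 = 0
  · have hxy : v 0 ≠ 0 ∨ v 1 ≠ 0 := by
      by_contra! h
      exact hv (funext fun i ↦ by fin_cases i <;> simp [h.1, h.2, hz])
    simp only [hz, mul_zero, add_zero, ne_eq, OfNat.ofNat_ne_zero, not_false_eq_true, zero_pow]
    rcases hxy with h | h <;> positivity
  · have hschur : 0 < d₁ * d₂ * c - d₂ * b₁ ^ 2 - d₁ * b₂ ^ 2 := by linarith
    positivity

theorem Real.rpow_sub_one_eq_rpow_sub_two_mul {x : ℝ} (hx : x ≠ 0) (s : ℝ) :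
    x ^ (s - 1) = x ^ (s - 2) * x := by
  rw [← Real.rpow_add_one hx]
  ring_nf

theorem Real.rpow_eq_rpow_sub_two_mul_sq {x : ℝ} (hx : x ≠ 0) (s : ℝ) :
    x ^ s = x ^ (s - 2) * x ^ 2 := by
  rw [← Real.rpow_add_natCast hx]
  norm_num

/-- in the supersonic case `M₊ > 1`, the matrix `M₃` is
positive definite. -/
theorem stmt5 (A₁ A₂ γ α ρp np up : ℝ)
    (hA₁ : 0 < A₁) (hA₂ : 0 < A₂) (hγ : 1 ≤ γ) (hα : 1 ≤ α)
    (hρ : 0 < ρp) (hn : 0 < np) (hu : up < 0)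
    (hsup : A₁ * γ * ρp ^ γ + A₂ * α * np ^ α < up ^ 2 * (ρp + np)) :
    (M3 A₁ A₂ γ α ρp np up).PosDef := by
  have hP : 0 < A₁ * γ * ρp ^ (γ - 2) :=
    mul_pos (mul_pos hA₁ (by linarith)) (Real.rpow_pos_of_pos hρ _)
  have hQ : 0 < A₂ * α * np ^ (α - 2) :=
    mul_pos (mul_pos hA₂ (by linarith)) (Real.rpow_pos_of_pos hn _)
  rw [Real.rpow_eq_rpow_sub_two_mul_sq hρ.ne', Real.rpow_eq_rpow_sub_two_mul_sq hn.ne'] at hsup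
  unfold M3
  rw [Real.rpow_sub_one_eq_rpow_sub_two_mul hρ.ne', Real.rpow_sub_one_eq_rpow_sub_two_mul hn.ne']
  set P := A₁ * γ * ρp ^ (γ - 2)
  set Q := A₂ * α * np ^ (α - 2)
  have hw : 0 < -up := neg_pos.mpr hu
  refine posDef_arrow_fin_three (neg_pos.mpr (mul_neg_of_pos_of_neg hP hu))
    (neg_pos.mpr (mul_neg_of_pos_of_neg hQ hu)) ?_
  have hmargin : 0 < up ^ 2 * (ρp + np) - (P * ρp ^ 2 + Q * np ^ 2) := by linarith
  linear_combination mul_pos (mul_pos (mul_pos hw hP) hQ) hmargin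
end

section
/- If u₊²(ρ₊+n₊) = A₁γρ₊^γ + A₂αn₊^α (sonic case M₊=1), then the symmetric matrix M₃ is positive semidefinite, its determinant is zero, and its kernel is one-dimensional; equivalently, M₃ has exactly two strictly positive eigenvalues and the simple eigenvalue 0. -/
open Matrix

/-!
With `a = A₁γρ₊^{γ-2}` and `b = A₂αn₊^{α-2}` the sonic condition reads
`u₊²(ρ₊ + n₊) = aρ₊² + bn₊²`, and it gives the factorisation
`M₃ = (-u₊)⁻¹ (a w₁w₁ᵀ + b w₂w₂ᵀ)` with `w₁ = (u₊, 0, ρ₊)` and `w₂ = (0, u₊, n₊)`: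
a positive combination of two rank-one positive semidefinite matrices. Its kernel is
`w₁^⊥ ∩ w₂^⊥`, the line spanned by `(ρ₊, n₊, -u₊)`.
-/

theorem Real.rpow_sub_two_mul_sq {x : ℝ} (hx : x ≠ 0) (y : ℝ) :
    x ^ (y - 2) * x ^ 2 = x ^ y := by
  rw [← Real.rpow_add_natCast hx]; norm_num

def reducedM3 (a b ρ n u : ℝ) : Matrix (Fin 3) (Fin 3) ℝ :=
  !![-(a * u), 0, -(a * ρ); 0, -(b * u), -(b * n); -(a * ρ), -(b * n), -((ρ + n) * u)]

theorem M3_eq_reducedM3 (A₁ A₂ γ α : ℝ) {ρ n : ℝ} (hρ : ρ ≠ 0) (hn : n ≠ 0) (u : ℝ) :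
    M3 A₁ A₂ γ α ρ n u = reducedM3 (A₁ * γ * ρ ^ (γ - 2)) (A₂ * α * n ^ (α - 2)) ρ n u := by
  have hρ' : ρ ^ (γ - 1) = ρ ^ (γ - 2) * ρ := by
    rw [← Real.rpow_add_one hρ]; ring_nf
  have hn' : n ^ (α - 1) = n ^ (α - 2) * n := by
    rw [← Real.rpow_add_one hn]; ring_nf
  rw [M3, reducedM3, hρ', hn']
  ring_nf

theorem reducedM3_eq_smul_add_vecMulVec {a b ρ n u : ℝ} (hu : u ≠ 0)
    (hson : u ^ 2 * (ρ + n) = a * ρ ^ 2 + b * n ^ 2) :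
    reducedM3 a b ρ n u = (-u)⁻¹ •
      (a • vecMulVec ![u, 0, ρ] ![u, 0, ρ] + b • vecMulVec ![0, u, n] ![0, u, n]) := by
  ext i j
  fin_cases i <;> fin_cases j <;>
    simp only [reducedM3, vecMulVec, Fin.isValue, Fin.zero_eta, Fin.mk_one, Fin.reduceFinMk,
      of_apply, cons_val', cons_val, cons_val_zero, cons_val_one, cons_val_fin_one, inv_neg,
      smul_of, of_add_of, Matrix.smul_apply, Pi.add_apply, Pi.smul_apply, smul_eq_mul, zero_mul,
      mul_zero, add_zero, zero_add, neg_mul, neg_inj] <;>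
    field_simp
  linear_combination hson

theorem reducedM3_posSemidef {a b ρ n u : ℝ} (ha : 0 ≤ a) (hb : 0 ≤ b) (hu : u < 0)
    (hson : u ^ 2 * (ρ + n) = a * ρ ^ 2 + b * n ^ 2) : (reducedM3 a b ρ n u).PosSemidef := by
  have hw : ∀ w : Fin 3 → ℝ, (vecMulVec w w).PosSemidef := fun w => by
    simpa using posSemidef_vecMulVec_self_star w
  rw [reducedM3_eq_smul_add_vecMulVec hu.ne hson]
  exact (((hw _).smul ha).add ((hw _).smul hb)).smul (by simpa using hu.le)

theorem reducedM3_mulVec_eq_zero {a b ρ n u : ℝ}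
    (hson : u ^ 2 * (ρ + n) = a * ρ ^ 2 + b * n ^ 2) :
    reducedM3 a b ρ n u *ᵥ ![ρ, n, -u] = 0 := by
  ext i
  fin_cases i <;>
    simp only [reducedM3, mulVec, dotProduct, Fin.sum_univ_three, Fin.isValue, Fin.zero_eta,
      Fin.mk_one, Fin.reduceFinMk, of_apply, cons_val', cons_val, cons_val_zero, cons_val_one,
      cons_val_fin_one, Pi.zero_apply, zero_mul, add_zero, zero_add, neg_mul, mul_neg, neg_neg]
  · ring
  · ring
  · linear_combination hson

theorem ker_reducedM3 {a b ρ n u : ℝ} (ha : a ≠ 0) (hb : b ≠ 0) (hu : u ≠ 0)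
    (hson : u ^ 2 * (ρ + n) = a * ρ ^ 2 + b * n ^ 2) :
    LinearMap.ker (reducedM3 a b ρ n u).mulVecLin = Submodule.span ℝ {![ρ, n, -u]} := by
  refine le_antisymm (fun x hx => ?_) ?_
  · have hx : reducedM3 a b ρ n u *ᵥ x = 0 := hx
    have h0 := congrFun hx 0
    have h1 := congrFun hx 1
    simp only [reducedM3, mulVec, dotProduct, Fin.sum_univ_three, Fin.isValue, of_apply, cons_val',
      cons_val, cons_val_zero, cons_val_one, cons_val_fin_one, Pi.zero_apply, zero_mul, add_zero,
      zero_add, neg_mul] at h0 h1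
    have e0 : u * x 0 + ρ * x 2 = 0 :=
      (mul_eq_zero.mp (by linear_combination -h0 : a * (u * x 0 + ρ * x 2) = 0)).resolve_left ha
    have e1 : u * x 1 + n * x 2 = 0 :=
      (mul_eq_zero.mp (by linear_combination -h1 : b * (u * x 1 + n * x 2) = 0)).resolve_left hb
    refine Submodule.mem_span_singleton.mpr ⟨-x 2 / u, ?_⟩
    ext i
    fin_cases i <;>
      simp only [Fin.isValue, Fin.zero_eta, Fin.mk_one, Fin.reduceFinMk, Pi.smul_apply, cons_val,
        cons_val_zero, cons_val_one, smul_eq_mul, mul_neg] <;>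
      field_simp
    · linear_combination -e0
    · linear_combination -e1
  · rw [Submodule.span_le, Set.singleton_subset_iff]
    exact reducedM3_mulVec_eq_zero hson

/-- in the sonic case `M₊ = 1`, the matrix `M₃` is positive
semidefinite, has zero determinant and a one-dimensional kernel. -/
theorem stmt6 (A₁ A₂ γ α ρp np up : ℝ)
    (hA₁ : 0 < A₁) (hA₂ : 0 < A₂) (hγ : 1 ≤ γ) (hα : 1 ≤ α)
    (hρ : 0 < ρp) (hn : 0 < np) (hu : up < 0)
    (hson : up ^ 2 * (ρp + np) = A₁ * γ * ρp ^ γ + A₂ * α * np ^ α) :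
    (M3 A₁ A₂ γ α ρp np up).PosSemidef ∧
    (M3 A₁ A₂ γ α ρp np up).det = 0 ∧
    Module.finrank ℝ (LinearMap.ker (M3 A₁ A₂ γ α ρp np up).mulVecLin) = 1 := by
  have ha : 0 < A₁ * γ * ρp ^ (γ - 2) := by
    have := Real.rpow_pos_of_pos hρ (γ - 2); positivity
  have hb : 0 < A₂ * α * np ^ (α - 2) := by
    have := Real.rpow_pos_of_pos hn (α - 2); positivity
  have hson' : up ^ 2 * (ρp + np) =
      A₁ * γ * ρp ^ (γ - 2) * ρp ^ 2 + A₂ * α * np ^ (α - 2) * np ^ 2 := by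
    rw [hson, mul_assoc (A₁ * γ), mul_assoc (A₂ * α), Real.rpow_sub_two_mul_sq hρ.ne',
      Real.rpow_sub_two_mul_sq hn.ne']
  have hv : (![ρp, np, -up] : Fin 3 → ℝ) ≠ 0 := fun h => hρ.ne' (congrFun h 0)
  rw [M3_eq_reducedM3 A₁ A₂ γ α hρ.ne' hn.ne', ker_reducedM3 ha.ne' hb.ne' hu.ne hson']
  exact ⟨reducedM3_posSemidef ha.le hb.le hu hson',
    exists_mulVec_eq_zero_iff.mp ⟨_, hv, reducedM3_mulVec_eq_zero hson'⟩,
    finrank_span_singleton hv⟩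
end

section
/- Let j > 2. There exists a constant C > 0 (depending only on j) such that for every δ with 0 < δ ≤ 1 and every continuously differentiable function ψ : [0,∞) → ℝ with ∫₀^∞ ψ'(x)² dx < ∞, one has ∫₀^∞ (δ^j/(1+δx)^j) ψ(x)² dx ≤ C δ^{j−2} ( ψ(0)² + ∫₀^∞ ψ'(x)² dx ). -/
/-!
By the fundamental theorem of calculus and Cauchy–Schwarz, `ψ x ^ 2 ≤ 2 ψ(0)² + 2 x E` with
`E = ∫ ψ'²`. For `δ ≤ 1` this gives `δ ψ(x)² ≤ 2 (ψ(0)² + E) (1 + δ x)`, so the weighted integrand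
is at most `2 (ψ(0)² + E) δ^(j-1) / (1 + δ x)^(j-1)`, whose integral over `(0, ∞)` equals
`2 (ψ(0)² + E) δ^(j-2) / (j - 2)`.
-/

open Real MeasureTheory Set Filter Topology

theorem sq_integral_le_measureReal_mul_integral_sq {α : Type*} [MeasurableSpace α]
    {μ : Measure α} [IsFiniteMeasure μ] {f : α → ℝ} (hf : MemLp f 2 μ) :
    (∫ a, f a ∂μ) ^ 2 ≤ μ.real univ * ∫ a, f a ^ 2 ∂μ := by
  rcases eq_zero_or_neZero μ with rfl | _
  · simp
  have hm : 0 < μ.real univ := by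
    simpa [measureReal_def, ENNReal.toReal_pos_iff] using
      Measure.measure_univ_pos.mpr (NeZero.ne μ)
  have hjensen := (even_two.convexOn_pow (𝕜 := ℝ)).map_average_le
    (continuous_pow 2).continuousOn isClosed_univ (by simp) (hf.integrable one_le_two)
    hf.integrable_sq
  rw [average_eq, average_eq, smul_eq_mul, smul_eq_mul, mul_pow] at hjensen
  have := mul_le_mul_of_nonneg_left hjensen (sq_nonneg (μ.real univ))
  field_simp at this
  linarith

theorem sq_sub_le_mul_integral_deriv_sq {ψ : ℝ → ℝ} (hψ : ContDiff ℝ 1 ψ) {a x : ℝ}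
    (hax : a ≤ x) :
    (ψ x - ψ a) ^ 2 ≤ (x - a) * ∫ t in Ioc a x, deriv ψ t ^ 2 := by
  have hd : Continuous (deriv ψ) := hψ.continuous_deriv le_rfl
  have hftc : ∫ t in Ioc a x, deriv ψ t = ψ x - ψ a := by
    rw [← intervalIntegral.integral_of_le hax]
    exact intervalIntegral.integral_deriv_eq_sub
      (fun t _ => (hψ.differentiable one_ne_zero).differentiableAt) (hd.intervalIntegrable a x)
  have hL2 : MemLp (deriv ψ) 2 (volume.restrict (Ioc a x)) :=
    (memLp_two_iff_integrable_sq hd.aestronglyMeasurable).mpr (hd.pow 2).integrableOn_Ioc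
  simpa [hftc, hax] using sq_integral_le_measureReal_mul_integral_sq hL2

theorem sq_le_of_integrableOn_deriv_sq {ψ : ℝ → ℝ} (hψ : ContDiff ℝ 1 ψ) {a : ℝ}
    (hi : IntegrableOn (fun t => deriv ψ t ^ 2) (Ioi a)) {x : ℝ} (hax : a ≤ x) :
    ψ x ^ 2 ≤ 2 * ψ a ^ 2 + 2 * (x - a) * ∫ t in Ioi a, deriv ψ t ^ 2 := by
  have hmono : ∫ t in Ioc a x, deriv ψ t ^ 2 ≤ ∫ t in Ioi a, deriv ψ t ^ 2 :=
    setIntegral_mono_set hi (.of_forall fun t => sq_nonneg _) Ioc_subset_Ioi_self.eventuallyLE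
  nlinarith [sq_sub_le_mul_integral_deriv_sq hψ hax, sq_nonneg (ψ x - 2 * ψ a),
    mul_le_mul_of_nonneg_left hmono (sub_nonneg.mpr hax)]

theorem rpow_div_one_add_mul_rpow_mul_le {δ j x y A B : ℝ} (hδ : 0 < δ) (hδ1 : δ ≤ 1)
    (hx : 0 ≤ x) (hA : 0 ≤ A) (hB : 0 ≤ B) (hy : y ≤ 2 * A + 2 * x * B) :
    δ ^ j / (1 + δ * x) ^ j * y ≤ 2 * (A + B) * (δ ^ (j - 1) / (1 + δ * x) ^ (j - 1)) := by
  have hpos : 0 < 1 + δ * x := by positivity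
  have hsplit : δ ^ j / (1 + δ * x) ^ j =
      δ ^ (j - 1) / (1 + δ * x) ^ (j - 1) * (δ / (1 + δ * x)) := by
    rw [rpow_sub_one hδ.ne', rpow_sub_one hpos.ne']
    field_simp
  have hδy : δ / (1 + δ * x) * y ≤ 2 * (A + B) := by
    rw [div_mul_eq_mul_div, div_le_iff₀ hpos]
    nlinarith [mul_le_mul_of_nonneg_left hy hδ.le, mul_nonneg (mul_nonneg hδ.le hx) hA]
  rw [hsplit, mul_assoc, mul_comm]
  exact mul_le_mul_of_nonneg_right hδy (by positivity)

section WeightIntegral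

variable {δ k : ℝ}

theorem hasDerivAt_rpow_one_add_mul {x : ℝ} (hδ : δ ≠ 0) (hk : k ≠ 1) (hx : 0 < 1 + δ * x) :
    HasDerivAt (fun x => -(δ ^ (k - 1) / (k - 1)) * (1 + δ * x) ^ (1 - k))
      (δ ^ k / (1 + δ * x) ^ k) x := by
  refine ((((hasDerivAt_id' x).const_mul δ).const_add 1).rpow_const (p := 1 - k)
    (Or.inl hx.ne')).const_mul _ |>.congr_deriv ?_
  have hk1 : k - 1 ≠ 0 := sub_ne_zero.mpr hk
  rw [sub_sub_cancel_left, rpow_neg hx.le, rpow_sub_one hδ]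
  field_simp
  ring

theorem tendsto_rpow_one_add_mul_atTop (hδ : 0 < δ) (hk : 1 < k) :
    Tendsto (fun x => -(δ ^ (k - 1) / (k - 1)) * (1 + δ * x) ^ (1 - k)) atTop (𝓝 0) := by
  have h : Tendsto (fun x => 1 + δ * x) atTop atTop :=
    tendsto_atTop_add_const_left _ 1 (tendsto_id.const_mul_atTop hδ)
  simpa [neg_sub] using ((tendsto_rpow_neg_atTop (by linarith : 0 < k - 1)).comp h).const_mul
    (-(δ ^ (k - 1) / (k - 1)))

theorem rpow_div_one_add_mul_nonneg {x : ℝ} (hδ : 0 < δ) (hx : 0 ≤ x) :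
    0 ≤ δ ^ k / (1 + δ * x) ^ k := by
  have : 0 < 1 + δ * x := by positivity
  positivity

theorem integrableOn_Ioi_rpow_div_one_add_mul (hδ : 0 < δ) (hk : 1 < k) :
    IntegrableOn (fun x => δ ^ k / (1 + δ * x) ^ k) (Ioi 0) :=
  integrableOn_Ioi_deriv_of_nonneg'
    (fun x hx => hasDerivAt_rpow_one_add_mul hδ.ne' hk.ne' (by have := hx.out; positivity))
    (fun x hx => rpow_div_one_add_mul_nonneg hδ hx.out.le) (tendsto_rpow_one_add_mul_atTop hδ hk)

theorem integral_Ioi_rpow_div_one_add_mul (hδ : 0 < δ) (hk : 1 < k) :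
    ∫ x in Ioi (0 : ℝ), δ ^ k / (1 + δ * x) ^ k = δ ^ (k - 1) / (k - 1) := by
  rw [integral_Ioi_of_hasDerivAt_of_nonneg'
    (fun x hx => hasDerivAt_rpow_one_add_mul hδ.ne' hk.ne' (by have := hx.out; positivity))
    (fun x hx => rpow_div_one_add_mul_nonneg hδ hx.out.le) (tendsto_rpow_one_add_mul_atTop hδ hk)]
  simp

end WeightIntegral

/-- weighted Poincaré-type inequality with algebraic weight
(Lemma 3.2, part 2). -/
theorem stmt9 (j : ℝ) (hj : 2 < j) :
    ∃ C > 0, ∀ δ : ℝ, 0 < δ → δ ≤ 1 → ∀ ψ : ℝ → ℝ, ContDiff ℝ 1 ψ →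
      IntegrableOn (fun x => deriv ψ x ^ 2) (Ioi 0) →
      ∫ x in Ioi (0:ℝ), δ ^ j / (1 + δ * x) ^ j * ψ x ^ 2 ≤
        C * δ ^ (j - 2) * (ψ 0 ^ 2 + ∫ x in Ioi (0:ℝ), deriv ψ x ^ 2) := by
  refine ⟨2 / (j - 2), div_pos two_pos (sub_pos.mpr hj), fun δ hδ hδ1 ψ hψ hi => ?_⟩
  set E := ∫ x in Ioi (0:ℝ), deriv ψ x ^ 2
  have hE : 0 ≤ E := setIntegral_nonneg measurableSet_Ioi fun x _ => sq_nonneg _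
  have hj1 : 1 < j - 1 := by linarith
  have hbound : ∀ x ∈ Ioi (0 : ℝ), δ ^ j / (1 + δ * x) ^ j * ψ x ^ 2 ≤
      2 * (ψ 0 ^ 2 + E) * (δ ^ (j - 1) / (1 + δ * x) ^ (j - 1)) := fun x hx =>
    rpow_div_one_add_mul_rpow_mul_le hδ hδ1 hx.out.le (sq_nonneg _) hE
      (by simpa using sq_le_of_integrableOn_deriv_sq hψ hi hx.out.le)
  calc ∫ x in Ioi (0:ℝ), δ ^ j / (1 + δ * x) ^ j * ψ x ^ 2
      ≤ ∫ x in Ioi (0:ℝ), 2 * (ψ 0 ^ 2 + E) * (δ ^ (j - 1) / (1 + δ * x) ^ (j - 1)) :=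
        integral_mono_of_nonneg
          ((ae_restrict_iff' measurableSet_Ioi).mpr (.of_forall fun x hx =>
            mul_nonneg (rpow_div_one_add_mul_nonneg hδ hx.out.le) (sq_nonneg _)))
          ((integrableOn_Ioi_rpow_div_one_add_mul hδ hj1).const_mul _)
          ((ae_restrict_iff' measurableSet_Ioi).mpr (.of_forall hbound))
    _ = 2 / (j - 2) * δ ^ (j - 2) * (ψ 0 ^ 2 + E) := by
        rw [integral_const_mul, integral_Ioi_rpow_div_one_add_mul hδ hj1, sub_sub,
          one_add_one_eq_two]
        ring
end

section
/- (Weighted cubic interpolation inequality.) Let ν ≥ 1 and let 0 < c₁ ≤ C₃ be constants. There exist constants ε > 0 and C > 0, depending only on ν, c₁, C₃, with the following property: for every δ > 0 and every continuously differentiable, nonincreasing function σ : [0,∞) → (0,∞) satisfying c₁δ/(1+δx) ≤ σ(x) ≤ C₃δ/(1+δx) and |σ'(x)| ≤ C₃δ²/(1+δx)² for all x ≥ 0, and with σ(0) ≤ ε, every continuously differentiable φ : [0,∞) → ℝ for which ∫₀^∞ σ^{−1}φ² dx, ∫₀^∞ σ^{−ν}(φ')² dx and ∫₀^∞ σ^{−(ν−2)}φ²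 dx are all finite satisfies ∫₀^∞ σ^{−(ν−1)/2}|φ|³ dx ≤ C (∫₀^∞ σ^{−1}φ² dx)^{1/2} · ( σ(0)φ(0)² + ∫₀^∞ σ^{−ν}(φ')² dx + ∫₀^∞ σ^{−(ν−2)}φ² dx ). -/
open Real MeasureTheory Set Filter Topology

/-!
Monotonicity and `σ 0 ≤ 1` give `σ ≤ 1`, hence `σ^ν ≤ σ^(2-ν)` for `ν ≥ 1`, and AM-GM yields
`2 |φ φ'| ≤ σ^(-ν) φ'^2 + σ^(2-ν) φ^2`. Since `φ^2` and its derivative are integrable, `φ^2`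
vanishes at infinity, so integrating from `x` to `∞` gives `φ(x)^2 ≤ D + E`, the sum of the last two
weighted integrals. Cauchy-Schwarz applied to `σ^(-(ν-1)/2) |φ|^3 = (σ^(-1/2) |φ|) (σ^(-(ν-2)/2) φ^2)`
then gives `√A · √((D + E) E) ≤ √A (D + E)` with `A = ∫ σ^(-1) φ^2`, so `ε = C = 1` work.
-/

theorem integral_mul_le_sqrt_integral_sq_mul_sqrt_integral_sq {α : Type*} [MeasurableSpace α]
    {μ : Measure α} {f g : α → ℝ} (hf : AEStronglyMeasurable f μ) (hg : AEStronglyMeasurable g μ)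
    (hf2 : Integrable (fun x => f x ^ 2) μ) (hg2 : Integrable (fun x => g x ^ 2) μ) :
    ∫ x, f x * g x ∂μ ≤ √(∫ x, f x ^ 2 ∂μ) * √(∫ x, g x ^ 2 ∂μ) := by
  have holder := integral_mul_norm_le_Lp_mul_Lq Real.HolderConjugate.two_two
    (by simpa using (memLp_two_iff_integrable_sq hf).2 hf2)
    (by simpa using (memLp_two_iff_integrable_sq hg).2 hg2)
  simp only [Real.norm_eq_abs, Real.rpow_two, sq_abs, ← Real.sqrt_eq_rpow] at holder
  calc ∫ x, f x * g x ∂μ ≤ ∫ x, |f x| * |g x| ∂μ := by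
        simpa only [Real.norm_eq_abs, abs_mul] using
          (le_abs_self _).trans (norm_integral_le_integral_norm (fun x => f x * g x))
    _ ≤ _ := holder

theorem sq_le_two_mul_integral_Ioi_abs_mul {φ φ' : ℝ → ℝ} {a x : ℝ} (hx : a ≤ x)
    (hderiv : ∀ y ∈ Ici a, HasDerivAt φ (φ' y) y)
    (hsq : IntegrableOn (fun y => φ y ^ 2) (Ioi a))
    (hprod : IntegrableOn (fun y => φ y * φ' y) (Ioi a)) :
    φ x ^ 2 ≤ 2 * ∫ y in Ioi a, |φ y * φ' y| := by
  have hderiv_sq : ∀ y ∈ Ici x, HasDerivAt (fun y => φ y ^ 2) (2 * (φ y * φ' y)) y :=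
    fun y hy => ((hderiv y (hx.trans hy)).fun_pow 2).congr_deriv (by push_cast; ring)
  have hprod_x : IntegrableOn (fun y => 2 * (φ y * φ' y)) (Ioi x) :=
    (hprod.mono_set (Ioi_subset_Ioi hx)).const_mul 2
  have hlim : Tendsto (fun y => φ y ^ 2) atTop (𝓝 0) :=
    tendsto_zero_of_hasDerivAt_of_integrableOn_Ioi (fun y hy => hderiv_sq y (mem_Ici_of_Ioi hy))
      hprod_x (hsq.mono_set (Ioi_subset_Ioi hx))
  have hftc := integral_Ioi_of_hasDerivAt_of_tendsto' hderiv_sq hprod_x hlim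
  calc φ x ^ 2 = -∫ y in Ioi x, 2 * (φ y * φ' y) := by linarith
    _ ≤ ∫ y in Ioi x, |2 * (φ y * φ' y)| := (neg_le_abs _).trans abs_integral_le_integral_abs
    _ = 2 * ∫ y in Ioi x, |φ y * φ' y| := by simp only [abs_mul, abs_two, integral_const_mul]
    _ ≤ 2 * ∫ y in Ioi a, |φ y * φ' y| :=
        mul_le_mul_of_nonneg_left (setIntegral_mono_set hprod.abs
          (ae_of_all _ fun _ => abs_nonneg _) (Ioi_subset_Ioi hx).eventuallyLE) zero_le_two

theorem rpow_div_two_sq {s : ℝ} (hs : 0 ≤ s) (t : ℝ) : (s ^ (t / 2)) ^ 2 = s ^ t := by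
  rw [← rpow_natCast, ← rpow_mul hs]
  norm_num

theorem two_mul_abs_mul_le_rpow_mul_sq_add {s ν : ℝ} (hs : 0 < s) (hs1 : s ≤ 1) (hν : 1 ≤ ν)
    (u v : ℝ) : 2 * |u * v| ≤ s ^ (-ν) * v ^ 2 + s ^ (-(ν - 2)) * u ^ 2 := by
  have hcancel : s ^ (-ν / 2) * s ^ (ν / 2) = 1 := by
    rw [← rpow_add hs, neg_div, neg_add_cancel, rpow_zero]
  calc 2 * |u * v| = 2 * (s ^ (-ν / 2) * |v|) * (s ^ (ν / 2) * |u|) := by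
        rw [abs_mul]; linear_combination (-2 * |u| * |v|) * hcancel
    _ ≤ (s ^ (-ν / 2) * |v|) ^ 2 + (s ^ (ν / 2) * |u|) ^ 2 := two_mul_le_add_sq _ _
    _ = s ^ (-ν) * v ^ 2 + s ^ ν * u ^ 2 := by
        rw [mul_pow, mul_pow, rpow_div_two_sq hs.le, rpow_div_two_sq hs.le, sq_abs, sq_abs]
    _ ≤ s ^ (-ν) * v ^ 2 + s ^ (-(ν - 2)) * u ^ 2 := by
        gcongr _ + ?_
        exact mul_le_mul_of_nonneg_right (rpow_le_rpow_of_exponent_ge hs hs1 (by linarith))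
          (sq_nonneg u)

section WeightedInterpolation

variable {ν : ℝ} {σ φ : ℝ → ℝ}

theorem sq_le_integral_weighted_deriv_sq_add (hν : 1 ≤ ν)
    (hσpos : ∀ x ∈ Ioi (0 : ℝ), 0 < σ x) (hσle : ∀ x ∈ Ioi (0 : ℝ), σ x ≤ 1)
    (hφ : Differentiable ℝ φ)
    (hA : IntegrableOn (fun x => σ x ^ (-(1 : ℝ)) * φ x ^ 2) (Ioi 0))
    (hD : IntegrableOn (fun x => σ x ^ (-ν) * deriv φ x ^ 2) (Ioi 0))
    (hE : IntegrableOn (fun x => σ x ^ (-(ν - 2)) * φ x ^ 2) (Ioi 0)) {x : ℝ} (hx : 0 ≤ x) :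
    φ x ^ 2 ≤ (∫ y in Ioi (0 : ℝ), σ y ^ (-ν) * deriv φ y ^ 2) +
      ∫ y in Ioi (0 : ℝ), σ y ^ (-(ν - 2)) * φ y ^ 2 := by
  have hamgm : ∀ y ∈ Ioi (0 : ℝ), 2 * |φ y * deriv φ y| ≤
      σ y ^ (-ν) * deriv φ y ^ 2 + σ y ^ (-(ν - 2)) * φ y ^ 2 :=
    fun y hy => two_mul_abs_mul_le_rpow_mul_sq_add (hσpos y hy) (hσle y hy) hν _ _
  have hprod : IntegrableOn (fun y => φ y * deriv φ y) (Ioi 0) := by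
    refine ((hD.add hE).div_const 2).mono'
      (hφ.continuous.measurable.mul (measurable_deriv φ)).aestronglyMeasurable
      ((ae_restrict_iff' measurableSet_Ioi).2 (ae_of_all _ fun y hy => ?_))
    rw [Real.norm_eq_abs, Pi.add_apply]
    linarith [hamgm y hy]
  have hsq : IntegrableOn (fun y => φ y ^ 2) (Ioi 0) := by
    refine hA.mono' (hφ.continuous.pow 2).aestronglyMeasurable
      ((ae_restrict_iff' measurableSet_Ioi).2 (ae_of_all _ fun y hy => ?_))
    rw [Real.norm_eq_abs, abs_of_nonneg (sq_nonneg _)]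
    exact le_mul_of_one_le_left (sq_nonneg _)
      (one_le_rpow_of_pos_of_le_one_of_nonpos (hσpos y hy) (hσle y hy) (by norm_num))
  calc φ x ^ 2 ≤ 2 * ∫ y in Ioi 0, |φ y * deriv φ y| :=
        sq_le_two_mul_integral_Ioi_abs_mul hx (fun y _ => (hφ y).hasDerivAt) hsq hprod
    _ = ∫ y in Ioi 0, 2 * |φ y * deriv φ y| := (integral_const_mul _ _).symm
    _ ≤ ∫ y in Ioi 0, (σ y ^ (-ν) * deriv φ y ^ 2 + σ y ^ (-(ν - 2)) * φ y ^ 2) :=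
        setIntegral_mono_on (hprod.abs.const_mul 2) (hD.add hE) measurableSet_Ioi hamgm
    _ = _ := integral_add hD hE

theorem integral_rpow_mul_abs_pow_three_le (hν : 1 ≤ ν) (hσ : Measurable σ)
    (hσpos : ∀ x ∈ Ioi (0 : ℝ), 0 < σ x) (hσle : ∀ x ∈ Ioi (0 : ℝ), σ x ≤ 1)
    (hφ : Differentiable ℝ φ)
    (hA : IntegrableOn (fun x => σ x ^ (-(1 : ℝ)) * φ x ^ 2) (Ioi 0))
    (hD : IntegrableOn (fun x => σ x ^ (-ν) * deriv φ x ^ 2) (Ioi 0))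
    (hE : IntegrableOn (fun x => σ x ^ (-(ν - 2)) * φ x ^ 2) (Ioi 0)) :
    ∫ x in Ioi (0 : ℝ), σ x ^ (-((ν - 1) / 2)) * |φ x| ^ 3 ≤
      √(∫ x in Ioi (0 : ℝ), σ x ^ (-(1 : ℝ)) * φ x ^ 2) *
        ((∫ x in Ioi (0 : ℝ), σ x ^ (-ν) * deriv φ x ^ 2) +
          ∫ x in Ioi (0 : ℝ), σ x ^ (-(ν - 2)) * φ x ^ 2) := by
  set D := ∫ x in Ioi (0 : ℝ), σ x ^ (-ν) * deriv φ x ^ 2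
  set E := ∫ x in Ioi (0 : ℝ), σ x ^ (-(ν - 2)) * φ x ^ 2
  have hD0 : 0 ≤ D := setIntegral_nonneg measurableSet_Ioi fun x hx => by
    have := hσpos x hx; positivity
  have hE0 : 0 ≤ E := setIntegral_nonneg measurableSet_Ioi fun x hx => by
    have := hσpos x hx; positivity
  set f : ℝ → ℝ := fun x => σ x ^ ((-1 : ℝ) / 2) * |φ x|
  set g : ℝ → ℝ := fun x => σ x ^ (-(ν - 2) / 2) * φ x ^ 2
  have hfg : ∀ x ∈ Ioi (0 : ℝ), σ x ^ (-((ν - 1) / 2)) * |φ x| ^ 3 = f x * g x := fun x hx => by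
    have hsplit : σ x ^ (-((ν - 1) / 2)) = σ x ^ ((-1 : ℝ) / 2) * σ x ^ (-(ν - 2) / 2) := by
      rw [← rpow_add (hσpos x hx)]; ring_nf
    simp only [f, g]
    rw [hsplit, ← sq_abs (φ x)]
    ring
  have hf_sq : ∀ x ∈ Ioi (0 : ℝ), f x ^ 2 = σ x ^ (-(1 : ℝ)) * φ x ^ 2 := fun x hx => by
    rw [mul_pow, rpow_div_two_sq (hσpos x hx).le, sq_abs]
  have hg_sq : ∀ x ∈ Ioi (0 : ℝ), g x ^ 2 ≤ (D + E) * (σ x ^ (-(ν - 2)) * φ x ^ 2) :=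
    fun x hx => by
      have hweight := (rpow_pos_of_pos (hσpos x hx) (-(ν - 2))).le
      calc g x ^ 2 = σ x ^ (-(ν - 2)) * φ x ^ 2 * φ x ^ 2 := by
            rw [mul_pow, rpow_div_two_sq (hσpos x hx).le]; ring
        _ ≤ σ x ^ (-(ν - 2)) * φ x ^ 2 * (D + E) := by
            gcongr
            exact sq_le_integral_weighted_deriv_sq_add hν hσpos hσle hφ hA hD hE hx.out.le
        _ = _ := mul_comm _ _
  have hf_meas : AEStronglyMeasurable f (volume.restrict (Ioi 0)) :=
    ((hσ.pow_const _).mul hφ.continuous.measurable.abs).aestronglyMeasurable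
  have hg_meas : AEStronglyMeasurable g (volume.restrict (Ioi 0)) :=
    ((hσ.pow_const _).mul (hφ.continuous.measurable.pow_const 2)).aestronglyMeasurable
  have hf_int : IntegrableOn (fun x => f x ^ 2) (Ioi 0) :=
    hA.congr_fun (fun x hx => (hf_sq x hx).symm) measurableSet_Ioi
  have hg_int : IntegrableOn (fun x => g x ^ 2) (Ioi 0) :=
    (hE.const_mul (D + E)).mono' (hg_meas.pow 2)
      ((ae_restrict_iff' measurableSet_Ioi).2 (ae_of_all _ fun x hx => by
        rw [Real.norm_eq_abs, abs_of_nonneg (sq_nonneg _)]; exact hg_sq x hx))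
  have hg_le : √(∫ x in Ioi (0 : ℝ), g x ^ 2) ≤ D + E := by
    refine sqrt_le_iff.2 ⟨add_nonneg hD0 hE0, ?_⟩
    calc ∫ x in Ioi (0 : ℝ), g x ^ 2 ≤ ∫ x in Ioi (0 : ℝ), (D + E) * (σ x ^ (-(ν - 2)) * φ x ^ 2) :=
          setIntegral_mono_on hg_int (hE.const_mul _) measurableSet_Ioi hg_sq
      _ = (D + E) * E := integral_const_mul _ _
      _ ≤ (D + E) ^ 2 := by nlinarith
  calc ∫ x in Ioi (0 : ℝ), σ x ^ (-((ν - 1) / 2)) * |φ x| ^ 3 = ∫ x in Ioi (0 : ℝ), f x * g x :=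
        setIntegral_congr_fun measurableSet_Ioi hfg
    _ ≤ √(∫ x in Ioi (0 : ℝ), f x ^ 2) * √(∫ x in Ioi (0 : ℝ), g x ^ 2) :=
        integral_mul_le_sqrt_integral_sq_mul_sqrt_integral_sq hf_meas hg_meas hf_int hg_int
    _ ≤ _ := by
        rw [setIntegral_congr_fun measurableSet_Ioi hf_sq]
        gcongr

end WeightedInterpolation

theorem stmt11_general (ν c₁ C₃ : ℝ) (hν : 1 ≤ ν) :
    ∃ ε > 0, ∃ C > 0, ∀ δ : ℝ, 0 < δ → ∀ σ : ℝ → ℝ,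
      ContDiff ℝ 1 σ → AntitoneOn σ (Ici 0) → (∀ x ≥ (0:ℝ), 0 < σ x) →
      (∀ x ≥ (0:ℝ), c₁ * δ / (1 + δ * x) ≤ σ x ∧ σ x ≤ C₃ * δ / (1 + δ * x)) →
      (∀ x ≥ (0:ℝ), |deriv σ x| ≤ C₃ * δ ^ 2 / (1 + δ * x) ^ 2) →
      σ 0 ≤ ε →
      ∀ φ : ℝ → ℝ, ContDiff ℝ 1 φ →
        IntegrableOn (fun x => σ x ^ (-(1:ℝ)) * φ x ^ 2) (Ioi 0) →
        IntegrableOn (fun x => σ x ^ (-ν) * deriv φ x ^ 2) (Ioi 0) →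
        IntegrableOn (fun x => σ x ^ (-(ν - 2)) * φ x ^ 2) (Ioi 0) →
        ∫ x in Ioi (0:ℝ), σ x ^ (-((ν - 1) / 2)) * |φ x| ^ 3 ≤
          C * Real.sqrt (∫ x in Ioi (0:ℝ), σ x ^ (-(1:ℝ)) * φ x ^ 2) *
            (σ 0 * φ 0 ^ 2 + (∫ x in Ioi (0:ℝ), σ x ^ (-ν) * deriv φ x ^ 2)
              + ∫ x in Ioi (0:ℝ), σ x ^ (-(ν - 2)) * φ x ^ 2) := by
  refine ⟨1, one_pos, 1, one_pos, fun δ _ σ hσ hσmono hσpos _ _ hσ0 φ hφ hA hD hE => ?_⟩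
  have hσle : ∀ x ∈ Ioi (0 : ℝ), σ x ≤ 1 := fun x hx =>
    (hσmono self_mem_Ici (mem_Ici.2 hx.out.le) hx.out.le).trans hσ0
  have hboundary : 0 ≤ √(∫ x in Ioi (0 : ℝ), σ x ^ (-(1 : ℝ)) * φ x ^ 2) * (σ 0 * φ 0 ^ 2) :=
    mul_nonneg (sqrt_nonneg _) (mul_nonneg (hσpos 0 le_rfl).le (sq_nonneg _))
  have hmain := integral_rpow_mul_abs_pow_three_le hν hσ.continuous.measurable
    (fun x hx => hσpos x hx.out.le) hσle (hφ.differentiable one_ne_zero) hA hD hE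
  linarith

/-- weighted cubic interpolation inequality (Lemma 4.5). -/
theorem stmt11 (ν c₁ C₃ : ℝ) (hν : 1 ≤ ν) (hc₁ : 0 < c₁) (hc₁C₃ : c₁ ≤ C₃) :
    ∃ ε > 0, ∃ C > 0, ∀ δ : ℝ, 0 < δ → ∀ σ : ℝ → ℝ,
      ContDiff ℝ 1 σ → AntitoneOn σ (Ici 0) → (∀ x ≥ (0:ℝ), 0 < σ x) →
      (∀ x ≥ (0:ℝ), c₁ * δ / (1 + δ * x) ≤ σ x ∧ σ x ≤ C₃ * δ / (1 + δ * x)) →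
      (∀ x ≥ (0:ℝ), |deriv σ x| ≤ C₃ * δ ^ 2 / (1 + δ * x) ^ 2) →
      σ 0 ≤ ε →
      ∀ φ : ℝ → ℝ, ContDiff ℝ 1 φ →
        IntegrableOn (fun x => σ x ^ (-(1:ℝ)) * φ x ^ 2) (Ioi 0) →
        IntegrableOn (fun x => σ x ^ (-ν) * deriv φ x ^ 2) (Ioi 0) →
        IntegrableOn (fun x => σ x ^ (-(ν - 2)) * φ x ^ 2) (Ioi 0) →
        ∫ x in Ioi (0:ℝ), σ x ^ (-((ν - 1) / 2)) * |φ x| ^ 3 ≤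
          C * Real.sqrt (∫ x in Ioi (0:ℝ), σ x ^ (-(1:ℝ)) * φ x ^ 2) *
            (σ 0 * φ 0 ^ 2 + (∫ x in Ioi (0:ℝ), σ x ^ (-ν) * deriv φ x ^ 2)
              + ∫ x in Ioi (0:ℝ), σ x ^ (-(ν - 2)) * φ x ^ 2) :=
  stmt11_general ν c₁ C₃ hν
end

section
/- (Boundary derivative estimate for steady states.) There exist constants δ₀ > 0 and C > 0, depending only on A₁, A₂, γ, α, μ, ρ₊, n₊, u₊, such that the following holds. Let u₋ < 0 with |u₋ − u₊| ≤ δ₀, and let (ρ̃, ũ, ñ, ṽ) : [0,∞) → ℝ⁴ be twice continuously differentiable with: ρ̃(x)ũ(x) = ρ₊u₊ and ñ(x)ṽ(x) = n₊u₊ for all x ≥ 0; (ρ̃ũ² + A₁ρ̃^γ)'(x) = μũ''(x) + ñ(x)(ṽ(x) − ũ(x)) and (ñṽ² + A₂ñ^α)'(x) = (ñṽ')'(x) − ñ(x)(ṽ(x) − ũ(x)) for all x > 0; ũ(0) = ṽ(0) = u₋; (ρ̃, ũ, ñ, ṽ)(x) → (ρ₊, u₊, n₊, u₊) and (ũ'(x),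 ṽ'(x)) → (0,0) as x → ∞; inf ρ̃ > 0, inf ñ > 0; ũ', ṽ', and ṽ − ũ are square-integrable on (0,∞); and sup_{x≥0} |(ρ̃ − ρ₊, ũ − u₊, ñ − n₊, ṽ − u₊)(x)| ≤ δ₀. Then |ũ'(0)| ≤ C|u₋ − u₊| and |ṽ'(0)| ≤ C|u₋ − u₊|. -/
/-!
Write `ρ̃ = ρ₊u₊ / ũ` and `ñ = n₊u₊ / ṽ`: the momentum fluxes become functions `h₁(ũ)`, `h₂(ṽ)` of
the velocities, and the equations read `(h₁(ũ))' = μũ'' + ñ(ṽ - ũ)`,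
`(h₂(ṽ))' = (ñṽ')' - ñ(ṽ - ũ)`. Testing them against `ũ - u₊` and `ṽ - u₊` gives an energy flux
`P` with `P' = D := μũ'² + ñṽ'² + ñ(ṽ - ũ)²` and `P → 0` at infinity, so
`∫₀^∞ D = -P(0) ≲ δ² + δ (|ũ'(0)| + |ṽ'(0)|)` with `δ = |u₋ - u₊|`. Since the derivatives of
`μũ'²` and `(ñṽ')²` are bounded below by `-C D`, also `ũ'(0)² + ṽ'(0)² ≲ ∫₀^∞ D`. For
`X = |ũ'(0)| + |ṽ'(0)|` this is a quadratic inequality `X² ≤ a δ² + b δ X`, whence `X ≲ δ`.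
-/

open Real MeasureTheory Set Filter Topology

theorem sub_le_integral_Ioi_of_hasDerivAt {F F' g : ℝ → ℝ} {a l : ℝ}
    (hF : ContinuousOn F (Ici a)) (hderiv : ∀ x ∈ Ioi a, HasDerivAt F (F' x) x)
    (hg : IntegrableOn g (Ioi a)) (hg_nonneg : ∀ x ∈ Ioi a, 0 ≤ g x)
    (hF'g : ∀ x ∈ Ioi a, -g x ≤ F' x) (hl : Tendsto F atTop (𝓝 l)) :
    F a - l ≤ ∫ x in Ioi a, g x := by
  have hgIci : IntegrableOn g (Ici a) := (integrableOn_Ici_iff_integrableOn_Ioi).mpr hg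
  have hR : ∀ R ≥ a, F a - F R ≤ ∫ x in Ioi a, g x := fun R hRa => calc
    F a - F R = (-F) R - (-F) a := by simp only [Pi.neg_apply]; ring
    _ ≤ ∫ x in a..R, g x :=
      intervalIntegral.sub_le_integral_of_hasDeriv_right_of_le hRa
        (hF.mono Icc_subset_Ici_self).neg
        (fun x hx => (hderiv x hx.1).neg.hasDerivWithinAt)
        (hgIci.mono_set Icc_subset_Ici_self) fun x hx => neg_le.mp (hF'g x hx.1)
    _ ≤ ∫ x in Ioi a, g x := by
      rw [intervalIntegral.integral_of_le hRa]
      exact setIntegral_mono_set hg (ae_restrict_of_forall_mem measurableSet_Ioi hg_nonneg)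
        Ioc_subset_Ioi_self.eventuallyLE
  exact le_of_tendsto (tendsto_const_nhds.sub hl) (eventually_ge_atTop a |>.mono hR)

noncomputable def relPotential (h : ℝ → ℝ) (b s : ℝ) : ℝ := ∫ t in b..s, (h t - h b)

theorem relPotential_self (h : ℝ → ℝ) (b : ℝ) : relPotential h b b = 0 :=
  intervalIntegral.integral_same

theorem hasDerivAt_relPotential {h : ℝ → ℝ} {U : Set ℝ} {b s : ℝ} (hU : IsOpen U)
    (hh : ContinuousOn h U) (hbs : uIcc b s ⊆ U) :
    HasDerivAt (relPotential h b) (h s - h b) s := by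
  have hh' : ContinuousOn (fun t => h t - h b) U := hh.sub continuousOn_const
  have hs : s ∈ U := hbs right_mem_uIcc
  exact intervalIntegral.integral_hasDerivAt_right (hh'.mono hbs).intervalIntegrable
    (hh'.stronglyMeasurableAtFilter hU s hs) (hh'.continuousAt (hU.mem_nhds hs))

theorem abs_relPotential_le {h : ℝ → ℝ} {b s K : ℝ} (hK : 0 ≤ K)
    (hh : ∀ t ∈ uIcc b s, |h t - h b| ≤ K * |t - b|) :
    |relPotential h b s| ≤ K * |s - b| ^ 2 := by
  have hbound : ∀ t ∈ uIoc b s, ‖h t - h b‖ ≤ K * |s - b| := fun t ht =>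
    (hh t (uIoc_subset_uIcc ht)).trans
      (mul_le_mul_of_nonneg_left (abs_sub_left_of_mem_uIcc (uIoc_subset_uIcc ht)) hK)
  simpa only [relPotential, Real.norm_eq_abs, sq, mul_assoc] using
    intervalIntegral.norm_integral_le_of_norm_le_const hbound

theorem le_mul_of_sq_le_add_mul {x a b δ : ℝ} (hx : 0 ≤ x) (ha : 0 ≤ a) (hb : 0 ≤ b)
    (hδ : 0 ≤ δ) (h : x ^ 2 ≤ a * δ ^ 2 + b * δ * x) : x ≤ (a + b + 1) * δ := by
  by_contra! hlt
  have hδx : δ ≤ x := le_trans (le_mul_of_one_le_left hδ (by linarith)) hlt.le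
  have hx₀ : 0 < x := lt_of_le_of_lt (by positivity) hlt
  nlinarith [mul_pos hx₀ (sub_pos.mpr hlt),
    mul_nonneg (mul_nonneg ha hδ) (sub_nonneg.mpr hδx), mul_nonneg hδ hx]

/-- `u, v, n` stand for `ũ, ṽ, ñ`, and `h₁, h₂` for the momentum fluxes as functions of the
velocities. -/
structure IsHalfLineSolution (μ b K₁ K₂ nlo nhi : ℝ) (I : Set ℝ) (h₁ h₂ u v n : ℝ → ℝ) :
    Prop where
  isOpen : IsOpen I
  convex : Convex ℝ I
  mem_b : b ∈ I
  differentiableOn₁ : DifferentiableOn ℝ h₁ I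
  differentiableOn₂ : DifferentiableOn ℝ h₂ I
  abs_deriv₁_le : ∀ s ∈ I, |deriv h₁ s| ≤ K₁
  abs_deriv₂_le : ∀ s ∈ I, |deriv h₂ s| ≤ K₂
  contDiff_u : ContDiff ℝ 2 u
  contDiff_v : ContDiff ℝ 2 v
  contDiff_n : ContDiff ℝ 1 n
  ode_u : ∀ x > 0, deriv (fun y => h₁ (u y)) x = μ * deriv (deriv u) x + n x * (v x - u x)
  ode_v : ∀ x > 0,
    deriv (fun y => h₂ (v y)) x = deriv (fun y => n y * deriv v y) x - n x * (v x - u x)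
  mem_u : ∀ x ≥ 0, u x ∈ I
  mem_v : ∀ x ≥ 0, v x ∈ I
  mem_n : ∀ x ≥ 0, n x ∈ Icc nlo nhi
  tendsto_u : Tendsto u atTop (𝓝 b)
  tendsto_v : Tendsto v atTop (𝓝 b)
  tendsto_deriv_u : Tendsto (deriv u) atTop (𝓝 0)
  tendsto_deriv_v : Tendsto (deriv v) atTop (𝓝 0)
  integrableOn_deriv_u_sq : IntegrableOn (fun x => deriv u x ^ 2) (Ioi 0)
  integrableOn_deriv_v_sq : IntegrableOn (fun x => deriv v x ^ 2) (Ioi 0)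
  integrableOn_sub_sq : IntegrableOn (fun x => (v x - u x) ^ 2) (Ioi 0)

theorem hasDerivAt_relPotential_comp {h w : ℝ → ℝ} {I : Set ℝ} {b x w' : ℝ} (hI : IsOpen I)
    (hIc : Convex ℝ I) (hb : b ∈ I) (hh : ContinuousOn h I) (hw : HasDerivAt w w' x)
    (hwx : w x ∈ I) :
    HasDerivAt (fun y => relPotential h b (w y)) ((h (w x) - h b) * w') x :=
  (hasDerivAt_relPotential hI hh (hIc.ordConnected.uIcc_subset hb hwx)).comp x hw

theorem abs_sub_le_of_abs_deriv_le {h : ℝ → ℝ} {I : Set ℝ} {K b s : ℝ} (hIc : Convex ℝ I)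
    (hI : IsOpen I) (hh : DifferentiableOn ℝ h I) (hK : ∀ t ∈ I, |deriv h t| ≤ K) (hb : b ∈ I)
    (hs : s ∈ I) : |h s - h b| ≤ K * |s - b| :=
  hIc.norm_image_sub_le_of_norm_deriv_le (fun _ ht => hh.differentiableAt (hI.mem_nhds ht)) hK
    hb hs

theorem abs_relPotential_le_of_abs_deriv_le {h : ℝ → ℝ} {I : Set ℝ} {K b s : ℝ}
    (hIc : Convex ℝ I) (hI : IsOpen I) (hh : DifferentiableOn ℝ h I)
    (hK : ∀ t ∈ I, |deriv h t| ≤ K) (hb : b ∈ I) (hs : s ∈ I) :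
    |relPotential h b s| ≤ K * |s - b| ^ 2 :=
  abs_relPotential_le ((abs_nonneg _).trans (hK b hb)) fun _ ht =>
    abs_sub_le_of_abs_deriv_le hIc hI hh hK hb (hIc.ordConnected.uIcc_subset hb hs ht)

noncomputable def energyFlux (μ b : ℝ) (h₁ h₂ u v n : ℝ → ℝ) (x : ℝ) : ℝ :=
  μ * deriv u x * (u x - b) + n x * deriv v x * (v x - b)
    - ((h₁ (u x) - h₁ b) * (u x - b) + (h₂ (v x) - h₂ b) * (v x - b))
    + relPotential h₁ b (u x) + relPotential h₂ b (v x)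

noncomputable def dissipation (μ : ℝ) (u v n : ℝ → ℝ) (x : ℝ) : ℝ :=
  μ * deriv u x ^ 2 + n x * deriv v x ^ 2 + n x * (v x - u x) ^ 2

namespace IsHalfLineSolution

variable {μ b K₁ K₂ nlo nhi : ℝ} {I : Set ℝ} {h₁ h₂ u v n : ℝ → ℝ}
  (hs : IsHalfLineSolution μ b K₁ K₂ nlo nhi I h₁ h₂ u v n)
include hs

theorem hasDerivAt_h₁_comp_u {x : ℝ} (hx : 0 ≤ x) :
    HasDerivAt (fun y => h₁ (u y)) (deriv h₁ (u x) * deriv u x) x :=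
  (hs.differentiableOn₁.differentiableAt (hs.isOpen.mem_nhds (hs.mem_u x hx))).hasDerivAt.comp x
    (hs.contDiff_u.differentiable two_ne_zero x).hasDerivAt

theorem hasDerivAt_h₂_comp_v {x : ℝ} (hx : 0 ≤ x) :
    HasDerivAt (fun y => h₂ (v y)) (deriv h₂ (v x) * deriv v x) x :=
  (hs.differentiableOn₂.differentiableAt (hs.isOpen.mem_nhds (hs.mem_v x hx))).hasDerivAt.comp x
    (hs.contDiff_v.differentiable two_ne_zero x).hasDerivAt

theorem hasDerivAt_n_mul_deriv_v (x : ℝ) :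
    HasDerivAt (fun y => n y * deriv v y) (deriv (fun y => n y * deriv v y) x) x :=
  ((hs.contDiff_n.differentiable one_ne_zero x).mul
    (hs.contDiff_v.differentiable_deriv_two x)).hasDerivAt

theorem hasDerivAt_energyFlux_of_nonneg {x : ℝ} (hx : 0 ≤ x) :
    HasDerivAt (energyFlux μ b h₁ h₂ u v n)
      (μ * deriv u x ^ 2 + n x * deriv v x ^ 2
        + (u x - b) * (μ * deriv (deriv u) x - deriv h₁ (u x) * deriv u x)
        + (v x - b) * (deriv (fun y => n y * deriv v y) x - deriv h₂ (v x) * deriv v x)) x := by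
  have Hu := (hs.contDiff_u.differentiable two_ne_zero x).hasDerivAt
  have Hv := (hs.contDiff_v.differentiable two_ne_zero x).hasDerivAt
  have Hdu := (hs.contDiff_u.differentiable_deriv_two x).hasDerivAt
  have Hndv := hs.hasDerivAt_n_mul_deriv_v x
  have Hh₁ := hs.hasDerivAt_h₁_comp_u hx
  have Hh₂ := hs.hasDerivAt_h₂_comp_v hx
  have HΦ₁ := hasDerivAt_relPotential_comp hs.isOpen hs.convex hs.mem_b
    hs.differentiableOn₁.continuousOn Hu (hs.mem_u x hx)
  have HΦ₂ := hasDerivAt_relPotential_comp hs.isOpen hs.convex hs.mem_b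
    hs.differentiableOn₂.continuousOn Hv (hs.mem_v x hx)
  have Hkin := ((Hdu.const_mul μ).mul (Hu.sub_const b)).add (Hndv.mul (Hv.sub_const b))
  have Hpress := ((Hh₁.sub_const (h₁ b)).mul (Hu.sub_const b)).add
    ((Hh₂.sub_const (h₂ b)).mul (Hv.sub_const b))
  exact (((Hkin.sub Hpress).add HΦ₁).add HΦ₂).congr_deriv (by ring)

theorem hasDerivAt_energyFlux {x : ℝ} (hx : 0 < x) :
    HasDerivAt (energyFlux μ b h₁ h₂ u v n) (dissipation μ u v n x) x := by
  have ode_u := hs.ode_u x hx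
  have ode_v := hs.ode_v x hx
  rw [(hs.hasDerivAt_h₁_comp_u hx.le).deriv] at ode_u
  rw [(hs.hasDerivAt_h₂_comp_v hx.le).deriv] at ode_v
  refine (hs.hasDerivAt_energyFlux_of_nonneg hx.le).congr_deriv ?_
  rw [dissipation]
  linear_combination -(u x - b) * ode_u - (v x - b) * ode_v

theorem n_nonneg {x : ℝ} (hnlo : 0 ≤ nlo) (hx : 0 ≤ x) : 0 ≤ n x :=
  hnlo.trans (hs.mem_n x hx).1

theorem dissipation_nonneg (hμ : 0 ≤ μ) (hnlo : 0 ≤ nlo) {x : ℝ} (hx : 0 ≤ x) :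
    0 ≤ dissipation μ u v n x := by
  have := hs.n_nonneg hnlo hx
  unfold dissipation
  positivity

theorem integrableOn_dissipation : IntegrableOn (dissipation μ u v n) (Ioi 0) := by
  have hbound : ∀ᵐ x ∂(volume.restrict (Ioi (0 : ℝ))), ‖n x‖ ≤ max |nlo| |nhi| :=
    ae_restrict_of_forall_mem measurableSet_Ioi fun x hx =>
      abs_le_max_abs_abs (hs.mem_n x hx.le).1 (hs.mem_n x hx.le).2
  have hn : AEStronglyMeasurable n (volume.restrict (Ioi 0)) :=
    hs.contDiff_n.continuous.aestronglyMeasurable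
  exact ((hs.integrableOn_deriv_u_sq.const_mul μ).add
    (hs.integrableOn_deriv_v_sq.bdd_mul hn hbound)).add (hs.integrableOn_sub_sq.bdd_mul hn hbound)

theorem tendsto_n_mul_deriv_v : Tendsto (fun x => n x * deriv v x) atTop (𝓝 0) := by
  refine isBoundedUnder_le_mul_tendsto_zero
    (isBoundedUnder_of_eventually_le (a := max |nlo| |nhi|) ?_) hs.tendsto_deriv_v
  filter_upwards [eventually_ge_atTop (0 : ℝ)] with x hx
  exact abs_le_max_abs_abs (hs.mem_n x hx).1 (hs.mem_n x hx).2

theorem tendsto_energyFlux : Tendsto (energyFlux μ b h₁ h₂ u v n) atTop (𝓝 0) := by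
  have hcont₁ : ContinuousAt h₁ b := hs.differentiableOn₁.continuousOn.continuousAt
    (hs.isOpen.mem_nhds hs.mem_b)
  have hcont₂ : ContinuousAt h₂ b := hs.differentiableOn₂.continuousOn.continuousAt
    (hs.isOpen.mem_nhds hs.mem_b)
  have hΦ₁ : ContinuousAt (relPotential h₁ b) b :=
    (hasDerivAt_relPotential hs.isOpen hs.differentiableOn₁.continuousOn
      (by simpa using hs.mem_b)).continuousAt
  have hΦ₂ : ContinuousAt (relPotential h₂ b) b :=
    (hasDerivAt_relPotential hs.isOpen hs.differentiableOn₂.continuousOn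
      (by simpa using hs.mem_b)).continuousAt
  have hu := hs.tendsto_u.sub_const b
  have hv := hs.tendsto_v.sub_const b
  have hkin := ((hs.tendsto_deriv_u.const_mul μ).mul hu).add (hs.tendsto_n_mul_deriv_v.mul hv)
  have hpress := (((hcont₁.tendsto.comp hs.tendsto_u).sub_const (h₁ b)).mul hu).add
    (((hcont₂.tendsto.comp hs.tendsto_v).sub_const (h₂ b)).mul hv)
  convert ((hkin.sub hpress).add (hΦ₁.tendsto.comp hs.tendsto_u)).add
    (hΦ₂.tendsto.comp hs.tendsto_v) using 2
  · rfl
  · simp [relPotential_self]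

theorem integral_dissipation :
    ∫ x in Ioi 0, dissipation μ u v n x = -energyFlux μ b h₁ h₂ u v n 0 := by
  rw [integral_Ioi_of_hasDerivAt_of_tendsto
    (hs.hasDerivAt_energyFlux_of_nonneg le_rfl).continuousAt.continuousWithinAt
    (fun x hx => hs.hasDerivAt_energyFlux hx) hs.integrableOn_dissipation hs.tendsto_energyFlux,
    zero_sub]

theorem neg_energyFlux_zero_le (hμ : 0 ≤ μ) (hnlo : 0 ≤ nlo) (h0 : u 0 = v 0) :
    -energyFlux μ b h₁ h₂ u v n 0 ≤
      2 * (K₁ + K₂) * |u 0 - b| ^ 2 + |u 0 - b| * (μ * |deriv u 0| + nhi * |deriv v 0|) := by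
  have hu₀ := hs.mem_u 0 le_rfl
  have hh₁ := abs_sub_le_of_abs_deriv_le hs.convex hs.isOpen hs.differentiableOn₁
    hs.abs_deriv₁_le hs.mem_b hu₀
  have hh₂ := abs_sub_le_of_abs_deriv_le hs.convex hs.isOpen hs.differentiableOn₂
    hs.abs_deriv₂_le hs.mem_b hu₀
  have hΦ₁ := abs_relPotential_le_of_abs_deriv_le hs.convex hs.isOpen hs.differentiableOn₁
    hs.abs_deriv₁_le hs.mem_b hu₀
  have hΦ₂ := abs_relPotential_le_of_abs_deriv_le hs.convex hs.isOpen hs.differentiableOn₂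
    hs.abs_deriv₂_le hs.mem_b hu₀
  have hn₀ : |n 0| ≤ nhi :=
    abs_le.mpr ⟨by linarith [hs.n_nonneg hnlo le_rfl, (hs.mem_n 0 le_rfl).2],
      (hs.mem_n 0 le_rfl).2⟩
  have hkin₁ : |μ * deriv u 0 * (u 0 - b)| ≤ μ * |deriv u 0| * |u 0 - b| := by
    rw [abs_mul, abs_mul, abs_of_nonneg hμ]
  have hkin₂ : |n 0 * deriv v 0 * (u 0 - b)| ≤ nhi * |deriv v 0| * |u 0 - b| := by
    rw [abs_mul, abs_mul]; gcongr
  have hpress₁ : |(h₁ (u 0) - h₁ b) * (u 0 - b)| ≤ K₁ * |u 0 - b| ^ 2 := by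
    rw [abs_mul, sq, ← mul_assoc]; gcongr
  have hpress₂ : |(h₂ (u 0) - h₂ b) * (u 0 - b)| ≤ K₂ * |u 0 - b| ^ 2 := by
    rw [abs_mul, sq, ← mul_assoc]; gcongr
  have hrhs : 2 * (K₁ + K₂) * |u 0 - b| ^ 2 + |u 0 - b| * (μ * |deriv u 0| + nhi * |deriv v 0|)
      = μ * |deriv u 0| * |u 0 - b| + nhi * |deriv v 0| * |u 0 - b|
        + 2 * (K₁ * |u 0 - b| ^ 2) + 2 * (K₂ * |u 0 - b| ^ 2) := by ring
  rw [energyFlux, ← h0, hrhs]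
  linarith [neg_abs_le (μ * deriv u 0 * (u 0 - b)), neg_abs_le (n 0 * deriv v 0 * (u 0 - b)),
    le_abs_self ((h₁ (u 0) - h₁ b) * (u 0 - b)), le_abs_self ((h₂ (u 0) - h₂ b) * (u 0 - b)),
    neg_abs_le (relPotential h₁ b (u 0)), neg_abs_le (relPotential h₂ b (u 0))]

theorem mul_sq_deriv_u_zero_le (hμ : 0 < μ) (hnlo : 0 ≤ nlo) :
    μ * deriv u 0 ^ 2 ≤ ((2 * K₁ + nhi) / μ + 1) * ∫ x in Ioi 0, dissipation μ u v n x := by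
  set c := (2 * K₁ + nhi) / μ + 1 with hc
  have hK₁ : 0 ≤ K₁ := (abs_nonneg _).trans (hs.abs_deriv₁_le b hs.mem_b)
  have hnhi : 0 ≤ nhi := hnlo.trans ((hs.mem_n 0 le_rfl).1.trans (hs.mem_n 0 le_rfl).2)
  have hcμ : c * μ = 2 * K₁ + nhi + μ := by rw [hc]; field_simp
  have hc₁ : 1 ≤ c := le_add_of_nonneg_left (by positivity)
  have hF : ∀ x, HasDerivAt (fun y => μ * deriv u y ^ 2)
      (2 * deriv u x * (μ * deriv (deriv u) x)) x := fun x =>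
    (((hs.contDiff_u.differentiable_deriv_two x).hasDerivAt.pow 2).const_mul μ).congr_deriv
      (by norm_num; ring)
  have hF' : ∀ x ∈ Ioi (0 : ℝ),
      -(c * dissipation μ u v n x) ≤ 2 * deriv u x * (μ * deriv (deriv u) x) := by
    intro x hx
    have ode := hs.ode_u x hx
    rw [(hs.hasDerivAt_h₁_comp_u hx.le).deriv] at ode
    have hk := (abs_le.mp (hs.abs_deriv₁_le (u x) (hs.mem_u x hx.le))).1
    have hn := hs.mem_n x hx.le
    have hn₀ := hnlo.trans hn.1
    rw [dissipation, show μ * deriv (deriv u) x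
      = deriv h₁ (u x) * deriv u x - n x * (v x - u x) by linarith]
    nlinarith [mul_nonneg (neg_le_iff_add_nonneg.mp hk) (sq_nonneg (deriv u x)),
      mul_nonneg hn₀ (sq_nonneg (deriv u x - (v x - u x))),
      mul_nonneg (sub_nonneg.mpr hn.2) (sq_nonneg (deriv u x)),
      mul_nonneg (sub_nonneg.mpr hc₁) (mul_nonneg hn₀ (sq_nonneg (v x - u x))),
      mul_nonneg (hμ.le) (sq_nonneg (deriv u x)),
      mul_nonneg (zero_le_one.trans hc₁) (mul_nonneg hn₀ (sq_nonneg (deriv v x))),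
      congrArg (· * deriv u x ^ 2) hcμ]
  have hlim : Tendsto (fun y => μ * deriv u y ^ 2) atTop (𝓝 0) := by
    simpa using (hs.tendsto_deriv_u.pow 2).const_mul μ
  have key := sub_le_integral_Ioi_of_hasDerivAt
    (hs.contDiff_u.continuous_deriv one_le_two |>.pow 2 |>.const_mul μ |>.continuousOn)
    (fun x _ => hF x) (hs.integrableOn_dissipation.const_mul c)
    (fun x hx => mul_nonneg (by linarith) (hs.dissipation_nonneg hμ.le hnlo hx.le)) hF' hlim
  rwa [integral_const_mul, sub_zero] at key

theorem sq_n_mul_deriv_v_zero_le (hμ : 0 ≤ μ) (hnlo : 0 ≤ nlo) :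
    (n 0 * deriv v 0) ^ 2 ≤ (2 * K₂ + nhi) * ∫ x in Ioi 0, dissipation μ u v n x := by
  have hK₂ : 0 ≤ K₂ := (abs_nonneg _).trans (hs.abs_deriv₂_le b hs.mem_b)
  have hnhi : 0 ≤ nhi := hnlo.trans ((hs.mem_n 0 le_rfl).1.trans (hs.mem_n 0 le_rfl).2)
  have hF : ∀ x, HasDerivAt (fun y => (n y * deriv v y) ^ 2)
      (2 * (n x * deriv v x) * deriv (fun y => n y * deriv v y) x) x := fun x =>
    ((hs.hasDerivAt_n_mul_deriv_v x).pow 2).congr_deriv (by norm_num)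
  have hF' : ∀ x ∈ Ioi (0 : ℝ), -((2 * K₂ + nhi) * dissipation μ u v n x) ≤
      2 * (n x * deriv v x) * deriv (fun y => n y * deriv v y) x := by
    intro x hx
    have ode := hs.ode_v x hx
    rw [(hs.hasDerivAt_h₂_comp_v hx.le).deriv] at ode
    have hk := (abs_le.mp (hs.abs_deriv₂_le (v x) (hs.mem_v x hx.le))).1
    have hn := hs.mem_n x hx.le
    have hn₀ := hnlo.trans hn.1
    rw [dissipation, show deriv (fun y => n y * deriv v y) x
      = deriv h₂ (v x) * deriv v x + n x * (v x - u x) by linarith]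
    nlinarith [mul_nonneg (neg_le_iff_add_nonneg.mp hk) (mul_nonneg hn₀ (sq_nonneg (deriv v x))),
      mul_nonneg hn₀ (mul_nonneg hn₀ (sq_nonneg (deriv v x + (v x - u x)))),
      mul_nonneg (sub_nonneg.mpr hn.2) (mul_nonneg hn₀ (sq_nonneg (deriv v x))),
      mul_nonneg (sub_nonneg.mpr hn.2) (mul_nonneg hn₀ (sq_nonneg (v x - u x))),
      mul_nonneg (by positivity : (0 : ℝ) ≤ 2 * K₂ + nhi) (mul_nonneg hμ (sq_nonneg (deriv u x))),
      mul_nonneg hK₂ (mul_nonneg hn₀ (sq_nonneg (v x - u x)))]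
  have hlim : Tendsto (fun y => (n y * deriv v y) ^ 2) atTop (𝓝 0) := by
    simpa using hs.tendsto_n_mul_deriv_v.pow 2
  have key := sub_le_integral_Ioi_of_hasDerivAt
    (fun x _ => (hF x).continuousAt.continuousWithinAt)
    (fun x _ => hF x) (hs.integrableOn_dissipation.const_mul (2 * K₂ + nhi))
    (fun x hx => mul_nonneg (by positivity) (hs.dissipation_nonneg hμ hnlo hx.le)) hF' hlim
  rwa [integral_const_mul, sub_zero] at key

end IsHalfLineSolution

theorem exists_abs_deriv_zero_le_of_isHalfLineSolution {μ K₁ K₂ nlo nhi : ℝ} (hμ : 0 < μ)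
    (hK₁ : 0 ≤ K₁) (hK₂ : 0 ≤ K₂) (hnlo : 0 < nlo) (hnhi : 0 ≤ nhi) :
    ∃ C > 0, ∀ {b : ℝ} {I : Set ℝ} {h₁ h₂ u v n : ℝ → ℝ},
      IsHalfLineSolution μ b K₁ K₂ nlo nhi I h₁ h₂ u v n → u 0 = v 0 →
        |deriv u 0| ≤ C * |u 0 - b| ∧ |deriv v 0| ≤ C * |u 0 - b| := by
  set M := ((2 * K₁ + nhi) / μ + 1) / μ + (2 * K₂ + nhi) / nlo ^ 2
  refine ⟨2 * M * (2 * (K₁ + K₂)) + 2 * M * (μ + nhi) + 1, by positivity,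
    fun {b I h₁ h₂ u v n} hs h0 => ?_⟩
  have hP := hs.neg_energyFlux_zero_le hμ.le hnlo.le h0
  rw [← hs.integral_dissipation] at hP
  have hu := hs.mul_sq_deriv_u_zero_le hμ hnlo.le
  have hv := hs.sq_n_mul_deriv_v_zero_le hμ.le hnlo.le
  have hn₀ : nlo ^ 2 * deriv v 0 ^ 2 ≤ (n 0 * deriv v 0) ^ 2 := by
    rw [mul_pow]; gcongr; exact (hs.mem_n 0 le_rfl).1
  set δ := |u 0 - b|
  set E := ∫ x in Ioi 0, dissipation μ u v n x
  have hu' : deriv u 0 ^ 2 ≤ ((2 * K₁ + nhi) / μ + 1) / μ * E := by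
    rw [div_mul_eq_mul_div, le_div_iff₀ hμ]
    linarith
  have hv' : deriv v 0 ^ 2 ≤ (2 * K₂ + nhi) / nlo ^ 2 * E := by
    rw [div_mul_eq_mul_div, le_div_iff₀ (by positivity)]
    linarith
  have hX : (|deriv u 0| + |deriv v 0|) ^ 2 ≤ 2 * M * (2 * (K₁ + K₂)) * δ ^ 2
      + 2 * M * (μ + nhi) * δ * (|deriv u 0| + |deriv v 0|) := calc
    _ ≤ 2 * (deriv u 0 ^ 2 + deriv v 0 ^ 2) := by
      rw [← sq_abs (deriv u 0), ← sq_abs (deriv v 0)]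
      nlinarith [sq_nonneg (|deriv u 0| - |deriv v 0|)]
    _ ≤ 2 * M * E := by linarith
    _ ≤ 2 * M * (2 * (K₁ + K₂) * δ ^ 2 + δ * (μ * |deriv u 0| + nhi * |deriv v 0|)) := by gcongr
    _ ≤ _ := by
      have : 0 ≤ 2 * M * δ * (μ * |deriv v 0| + nhi * |deriv u 0|) := by positivity
      linarith
  have hXδ := le_mul_of_sq_le_add_mul (by positivity) (by positivity) (by positivity)
    (abs_nonneg _) hX
  exact ⟨by linarith [abs_nonneg (deriv v 0)], by linarith [abs_nonneg (deriv u 0)]⟩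

/-- `ρ u² + A ρ ^ γ` as a function of `u` along the constraint `ρ u = c`. -/
noncomputable def momentumFlux (c A γ : ℝ) (s : ℝ) : ℝ := c * s + A * (c / s) ^ γ

theorem contDiffOn_momentumFlux {c : ℝ} (A γ : ℝ) (hc : c ≠ 0) :
    ContDiffOn ℝ 1 (momentumFlux c A γ) {0}ᶜ := fun _ hs =>
  (contDiffAt_const.mul contDiffAt_id |>.add <| contDiffAt_const.mul <|
    (contDiffAt_const.div contDiffAt_id hs).rpow_const_of_ne (div_ne_zero hc hs)).contDiffWithinAt

theorem momentumFlux_comp_eventuallyEq {ρ w : ℝ → ℝ} {c A γ x : ℝ} (hc : c ≠ 0)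
    (h : ∀ᶠ y in 𝓝 x, ρ y * w y = c) :
    (fun y => ρ y * w y ^ 2 + A * ρ y ^ γ) =ᶠ[𝓝 x] fun y => momentumFlux c A γ (w y) := by
  filter_upwards [h] with y hy
  have hw : w y ≠ 0 := fun h0 => hc (by rw [← hy, h0, mul_zero])
  rw [momentumFlux, ← hy, mul_div_cancel_right₀ _ hw]
  ring

theorem exists_abs_deriv_momentumFlux_le {c : ℝ} (A γ : ℝ) (hc : c ≠ 0) {l r : ℝ} (hr : r < 0) :
    ∃ K ≥ 0, DifferentiableOn ℝ (momentumFlux c A γ) (Ioo l r) ∧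
      ∀ s ∈ Ioo l r, |deriv (momentumFlux c A γ) s| ≤ K := by
  have hsub : Icc l r ⊆ {0}ᶜ := fun s hs (h : s = 0) => by linarith [h ▸ hs.2]
  have hflux := contDiffOn_momentumFlux A γ hc
  obtain ⟨K, hK⟩ := isCompact_Icc.exists_bound_of_continuousOn
    ((hflux.continuousOn_deriv_of_isOpen isOpen_compl_singleton le_rfl).mono hsub)
  exact ⟨max K 0, le_max_right _ _, (hflux.differentiableOn one_ne_zero).mono
    (Ioo_subset_Icc_self.trans hsub), fun s hs => (hK s (Ioo_subset_Icc_self hs)).trans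
      (le_max_left _ _)⟩

theorem mem_Ioo_of_abs_sub_le {s b : ℝ} (hb : b < 0) (h : |s - b| ≤ -b / 2) :
    s ∈ Ioo (2 * b) (b / 4) := by
  obtain ⟨h₁, h₂⟩ := abs_le.mp h
  constructor <;> linarith

theorem mem_Icc_of_mul_eq {m s a b : ℝ} (ha : 0 < a) (hb : b < 0) (hms : m * s = a * b)
    (h : |s - b| ≤ -b / 2) : m ∈ Icc (2 * a / 3) (2 * a) := by
  obtain ⟨h₁, h₂⟩ := abs_le.mp h
  have hs : s < 0 := by linarith
  constructor <;> nlinarith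

theorem stmt12_general (A₁ A₂ γ α μ ρp np up : ℝ)
    (hμ : 0 < μ) (hρ : 0 < ρp) (hn : 0 < np) (hu : up < 0) :
    ∃ δ₀ > 0, ∃ C > 0, ∀ um : ℝ, um < 0 → |um - up| ≤ δ₀ →
      ∀ sρ su sn sv : ℝ → ℝ,
        ContDiff ℝ 2 sρ → ContDiff ℝ 2 su → ContDiff ℝ 2 sn → ContDiff ℝ 2 sv →
        (∀ x ≥ (0:ℝ), sρ x * su x = ρp * up ∧ sn x * sv x = np * up) →
        (∀ x > (0:ℝ),
          deriv (fun y => sρ y * su y ^ 2 + A₁ * sρ y ^ γ) x =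
            μ * deriv (deriv su) x + sn x * (sv x - su x) ∧
          deriv (fun y => sn y * sv y ^ 2 + A₂ * sn y ^ α) x =
            deriv (fun y => sn y * deriv sv y) x - sn x * (sv x - su x)) →
        su 0 = um → sv 0 = um →
        Tendsto sρ atTop (nhds ρp) → Tendsto su atTop (nhds up) →
        Tendsto sn atTop (nhds np) → Tendsto sv atTop (nhds up) →
        Tendsto (deriv su) atTop (nhds 0) → Tendsto (deriv sv) atTop (nhds 0) →
        (∃ m > (0:ℝ), ∀ x ≥ (0:ℝ), m ≤ sρ x ∧ m ≤ sn x) →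
        IntegrableOn (fun x => deriv su x ^ 2) (Ioi 0) →
        IntegrableOn (fun x => deriv sv x ^ 2) (Ioi 0) →
        IntegrableOn (fun x => (sv x - su x) ^ 2) (Ioi 0) →
        (∀ x ≥ (0:ℝ), |sρ x - ρp| ≤ δ₀ ∧ |su x - up| ≤ δ₀ ∧
          |sn x - np| ≤ δ₀ ∧ |sv x - up| ≤ δ₀) →
        |deriv su 0| ≤ C * |um - up| ∧ |deriv sv 0| ≤ C * |um - up| := by
  have hc₁ : ρp * up ≠ 0 := (mul_neg_of_pos_of_neg hρ hu).ne
  have hc₂ : np * up ≠ 0 := (mul_neg_of_pos_of_neg hn hu).ne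
  obtain ⟨K₁, hK₁, hdiff₁, hK₁I⟩ :=
    exists_abs_deriv_momentumFlux_le A₁ γ hc₁ (l := 2 * up) (by linarith : up / 4 < 0)
  obtain ⟨K₂, hK₂, hdiff₂, hK₂I⟩ :=
    exists_abs_deriv_momentumFlux_le A₂ α hc₂ (l := 2 * up) (by linarith : up / 4 < 0)
  obtain ⟨C, hC, hbound⟩ := exists_abs_deriv_zero_le_of_isHalfLineSolution hμ hK₁ hK₂
    (by positivity : 0 < 2 * np / 3) (by positivity : 0 ≤ 2 * np)
  -- `δ₀ = -u₊/2` keeps `ũ, ṽ` in `[3u₊/2, u₊/2] ⊆ (2u₊, u₊/4)` and `ñ = n₊u₊/ṽ` in `[2n₊/3, 2n₊]`.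
  refine ⟨-up / 2, by linarith, C, hC, fun um _ _ sρ su sn sv _ hsu hsn hsv hmass hode hsu0 hsv0
    _ tu _ tv tdu tdv _ iu iv iw hδ => ?_⟩
  have hmass' : ∀ x > 0, ∀ᶠ y in 𝓝 x, sρ y * su y = ρp * up ∧ sn y * sv y = np * up :=
    fun x hx => eventually_of_mem (Ioi_mem_nhds hx) fun y hy => hmass y (le_of_lt hy)
  have hs : IsHalfLineSolution μ up K₁ K₂ (2 * np / 3) (2 * np) (Ioo (2 * up) (up / 4))
      (momentumFlux (ρp * up) A₁ γ) (momentumFlux (np * up) A₂ α) su sv sn :=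
    { isOpen := isOpen_Ioo, convex := convex_Ioo _ _, mem_b := ⟨by linarith, by linarith⟩
      differentiableOn₁ := hdiff₁, differentiableOn₂ := hdiff₂
      abs_deriv₁_le := hK₁I, abs_deriv₂_le := hK₂I
      contDiff_u := hsu, contDiff_v := hsv, contDiff_n := hsn.of_le one_le_two
      ode_u := fun x hx => by
        rw [← (momentumFlux_comp_eventuallyEq hc₁ ((hmass' x hx).mono fun _ h => h.1)).deriv_eq]
        exact (hode x hx).1
      ode_v := fun x hx => by
        rw [← (momentumFlux_comp_eventuallyEq hc₂ ((hmass' x hx).mono fun _ h => h.2)).deriv_eq]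
        exact (hode x hx).2
      mem_u := fun x hx => mem_Ioo_of_abs_sub_le hu (hδ x hx).2.1
      mem_v := fun x hx => mem_Ioo_of_abs_sub_le hu (hδ x hx).2.2.2
      mem_n := fun x hx => mem_Icc_of_mul_eq hn hu (hmass x hx).2 (hδ x hx).2.2.2
      tendsto_u := tu, tendsto_v := tv, tendsto_deriv_u := tdu, tendsto_deriv_v := tdv
      integrableOn_deriv_u_sq := iu, integrableOn_deriv_v_sq := iv, integrableOn_sub_sq := iw }
  simpa only [hsu0] using hbound hs (hsu0.trans hsv0.symm)

/-- boundary derivative estimate for steady states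
(Lemma 2.1). -/
theorem stmt12 (A₁ A₂ γ α μ ρp np up : ℝ)
    (hA₁ : 0 < A₁) (hA₂ : 0 < A₂) (hγ : 1 ≤ γ) (hα : 1 ≤ α) (hμ : 0 < μ)
    (hρ : 0 < ρp) (hn : 0 < np) (hu : up < 0) :
    ∃ δ₀ > 0, ∃ C > 0, ∀ um : ℝ, um < 0 → |um - up| ≤ δ₀ →
      ∀ sρ su sn sv : ℝ → ℝ,
        ContDiff ℝ 2 sρ → ContDiff ℝ 2 su → ContDiff ℝ 2 sn → ContDiff ℝ 2 sv →
        (∀ x ≥ (0:ℝ), sρ x * su x = ρp * up ∧ sn x * sv x = np * up) →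
        (∀ x > (0:ℝ),
          deriv (fun y => sρ y * su y ^ 2 + A₁ * sρ y ^ γ) x =
            μ * deriv (deriv su) x + sn x * (sv x - su x) ∧
          deriv (fun y => sn y * sv y ^ 2 + A₂ * sn y ^ α) x =
            deriv (fun y => sn y * deriv sv y) x - sn x * (sv x - su x)) →
        su 0 = um → sv 0 = um →
        Tendsto sρ atTop (nhds ρp) → Tendsto su atTop (nhds up) →
        Tendsto sn atTop (nhds np) → Tendsto sv atTop (nhds up) →
        Tendsto (deriv su) atTop (nhds 0) → Tendsto (deriv sv) atTop (nhds 0) →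
        (∃ m > (0:ℝ), ∀ x ≥ (0:ℝ), m ≤ sρ x ∧ m ≤ sn x) →
        IntegrableOn (fun x => deriv su x ^ 2) (Ioi 0) →
        IntegrableOn (fun x => deriv sv x ^ 2) (Ioi 0) →
        IntegrableOn (fun x => (sv x - su x) ^ 2) (Ioi 0) →
        (∀ x ≥ (0:ℝ), |sρ x - ρp| ≤ δ₀ ∧ |su x - up| ≤ δ₀ ∧
          |sn x - np| ≤ δ₀ ∧ |sv x - up| ≤ δ₀) →
        |deriv su 0| ≤ C * |um - up| ∧ |deriv sv 0| ≤ C * |um - up| :=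
  stmt12_general A₁ A₂ γ α μ ρp np up hμ hρ hn hu
end

section
/- (Riccati-type decay bounds.) Let a > 0 and K ≥ 0. There exist constants δ₀ > 0, c > 0 and C > 0, depending only on a and K, such that for every δ with 0 < δ ≤ δ₀ and every differentiable function σ : [0,∞) → ℝ with σ(0) = δ and |σ'(x) + a σ(x)²| ≤ K|σ(x)|³ for all x ≥ 0, one has: σ(x) > 0 for all x ≥ 0, c·δ/(1+δx) ≤ σ(x) ≤ C·δ/(1+δx) for all x ≥ 0, and |σ'(x)| ≤ C·δ²/(1+δx)² for all x ≥ 0. -/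
/-!
Where `0 < σ ≤ δ` and `K δ ≤ a / 2`, the inequality gives `-(3a/2) σ² ≤ σ' ≤ -(a/2) σ²`.
So `σ` is squeezed between the explicit solutions `δ / (1 + b δ x)` of `y' = -b y²`,
`y 0 = δ`, for any rate `b < a/2` from above and any rate `b > 3a/2` from below: at a first
contact point the derivatives would be strictly ordered the wrong way. Both barriers are
comparable to `δ / (1 + δ x)`, and `|σ'| ≤ (3a/2) σ²` turns the upper one into the bound on `σ'`.
-/

lemma le_of_hasDerivAt_lt_boundary {f f' B B' : ℝ → ℝ}
    (hf : ∀ x ≥ (0 : ℝ), HasDerivAt f (f' x) x) (hB : ∀ x ≥ (0 : ℝ), HasDerivAt B (B' x) x)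
    (h0 : f 0 ≤ B 0) (bound : ∀ x ≥ (0 : ℝ), f x = B x → f' x < B' x) :
    ∀ x ≥ (0 : ℝ), f x ≤ B x := fun _ hx =>
  image_le_of_deriv_right_lt_deriv_boundary'
    (fun t ht => (hf t ht.1).continuousAt.continuousWithinAt)
    (fun t ht => (hf t ht.1).hasDerivWithinAt) h0
    (fun t ht => (hB t ht.1).continuousAt.continuousWithinAt)
    (fun t ht => (hB t ht.1).hasDerivWithinAt) (fun t ht => bound t ht.1) ⟨hx, le_rfl⟩

lemma hasDerivAt_div_one_add_mul {b δ x : ℝ} (hx : 1 + b * δ * x ≠ 0) :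
    HasDerivAt (fun y => δ / (1 + b * δ * y)) (-b * (δ / (1 + b * δ * x)) ^ 2) x := by
  have hlin : HasDerivAt (fun y => 1 + b * δ * y) (b * δ) x := by
    simpa using ((hasDerivAt_id x).const_mul (b * δ)).const_add 1
  refine ((hasDerivAt_const x δ).fun_div hlin hx).congr_deriv ?_
  field_simp
  ring

section Barrier

variable {b δ x : ℝ} (hb : 0 ≤ b) (hδ : 0 < δ) (hx : 0 ≤ x)
include hb hδ hx

lemma one_add_mul_pos : 0 < 1 + b * δ * x := by positivity

lemma div_one_add_mul_pos : 0 < δ / (1 + b * δ * x) :=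
  div_pos hδ (one_add_mul_pos hb hδ hx)

lemma div_one_add_mul_le_self : δ / (1 + b * δ * x) ≤ δ :=
  div_le_self hδ.le (le_add_of_nonneg_right (by positivity))

lemma div_one_add_mul_le_mul_div {C : ℝ} (hC : 1 ≤ C) (hCb : 1 ≤ C * b) :
    δ / (1 + b * δ * x) ≤ C * δ / (1 + δ * x) := by
  rw [div_le_div_iff₀ (one_add_mul_pos hb hδ hx) (by positivity)]
  have hδx : 0 ≤ δ * δ * x := by positivity
  nlinarith

lemma mul_div_le_div_one_add_mul {c : ℝ} (hc : c ≤ 1) (hcb : c * b ≤ 1) :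
    c * δ / (1 + δ * x) ≤ δ / (1 + b * δ * x) := by
  rw [div_le_div_iff₀ (by positivity) (one_add_mul_pos hb hδ hx)]
  have hδx : 0 ≤ δ * δ * x := by positivity
  nlinarith

end Barrier

lemma riccati_deriv_bounds {a K s d : ℝ} (hs : 0 < s) (hKs : K * s ≤ a / 2)
    (h : |d + a * s ^ 2| ≤ K * |s| ^ 3) :
    -(3 * a / 2) * s ^ 2 ≤ d ∧ d ≤ -(a / 2) * s ^ 2 := by
  rw [abs_of_pos hs, abs_le] at h
  have hKs3 : K * s ^ 3 ≤ a / 2 * s ^ 2 := by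
    have := mul_le_mul_of_nonneg_right hKs (sq_nonneg s)
    linarith [show K * s ^ 3 = K * s * s ^ 2 by ring]
  constructor <;> linarith [h.1, h.2]

section Riccati

variable {a K δ : ℝ} {σ : ℝ → ℝ} (hK : 0 ≤ K) (hKδ : K * δ ≤ a / 2)
  (hineq : ∀ x ≥ (0 : ℝ), |deriv σ x + a * σ x ^ 2| ≤ K * |σ x| ^ 3)

include hK hKδ hineq in
lemma riccati_deriv_bounds_of_le {x : ℝ} (hx : 0 ≤ x) (hpos : 0 < σ x) (hle : σ x ≤ δ) :
    -(3 * a / 2) * σ x ^ 2 ≤ deriv σ x ∧ deriv σ x ≤ -(a / 2) * σ x ^ 2 :=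
  riccati_deriv_bounds hpos ((mul_le_mul_of_nonneg_left hle hK).trans hKδ) (hineq x hx)

variable (hdiff : ∀ x ≥ (0 : ℝ), DifferentiableAt ℝ σ x) (hσ0 : σ 0 = δ) {b : ℝ} (hb : 0 ≤ b)
  (hδ : 0 < δ)
include hK hKδ hineq hdiff hσ0 hb hδ

lemma riccati_le_div_one_add_mul (hba : b < a / 2) :
    ∀ x ≥ (0 : ℝ), σ x ≤ δ / (1 + b * δ * x) := by
  refine le_of_hasDerivAt_lt_boundary (fun x hx => (hdiff x hx).hasDerivAt)
    (fun x hx => hasDerivAt_div_one_add_mul (one_add_mul_pos hb hδ hx).ne') (by simp [hσ0])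
    fun x hx hσx => ?_
  have hpos := div_one_add_mul_pos hb hδ hx
  have hderiv := (riccati_deriv_bounds_of_le hK hKδ hineq hx (hσx ▸ hpos)
    (hσx ▸ div_one_add_mul_le_self hb hδ hx)).2
  rw [hσx] at hderiv
  nlinarith [pow_pos hpos 2]

lemma div_one_add_mul_le_riccati (hba : 3 * a / 2 < b) :
    ∀ x ≥ (0 : ℝ), δ / (1 + b * δ * x) ≤ σ x := by
  refine le_of_hasDerivAt_lt_boundary
    (fun x hx => hasDerivAt_div_one_add_mul (one_add_mul_pos hb hδ hx).ne')
    (fun x hx => (hdiff x hx).hasDerivAt) (by simp [hσ0]) fun x hx hσx => ?_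
  have hpos := div_one_add_mul_pos hb hδ hx
  have hderiv := (riccati_deriv_bounds_of_le hK hKδ hineq hx (hσx ▸ hpos)
    (hσx ▸ div_one_add_mul_le_self hb hδ hx)).1
  rw [← hσx] at hderiv
  nlinarith [pow_pos hpos 2]

end Riccati

/-- Riccati-type decay bounds for the function σ. -/
theorem stmt13 (a K : ℝ) (ha : 0 < a) (hK : 0 ≤ K) :
    ∃ δ₀ > 0, ∃ c > 0, ∃ C > 0, ∀ δ : ℝ, 0 < δ → δ ≤ δ₀ →
      ∀ σ : ℝ → ℝ, (∀ x ≥ (0:ℝ), DifferentiableAt ℝ σ x) → σ 0 = δ →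
        (∀ x ≥ (0:ℝ), |deriv σ x + a * σ x ^ 2| ≤ K * |σ x| ^ 3) →
        ∀ x ≥ (0:ℝ), 0 < σ x ∧
          c * δ / (1 + δ * x) ≤ σ x ∧ σ x ≤ C * δ / (1 + δ * x) ∧
          |deriv σ x| ≤ C * δ ^ 2 / (1 + δ * x) ^ 2 := by
  obtain ⟨c, hc, hc1, hca⟩ : ∃ c > 0, c ≤ 1 ∧ c * (2 * a) ≤ 1 :=
    ⟨min 1 (2 * a)⁻¹, by positivity, min_le_left _ _,
      (mul_le_mul_of_nonneg_right (min_le_right _ _) (by positivity)).trans_eq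
        (inv_mul_cancel₀ (by positivity))⟩
  obtain ⟨C₁, hC₁, hC₁a⟩ : ∃ C₁ ≥ 1, 1 ≤ C₁ * (a / 4) :=
    ⟨max 1 (a / 4)⁻¹, le_max_left _ _,
      (inv_mul_cancel₀ (by positivity)).symm.trans_le
        (mul_le_mul_of_nonneg_right (le_max_right _ _) (by positivity))⟩
  refine ⟨a / (2 * (K + 1)), by positivity, c, hc, max C₁ (3 * a / 2 * C₁ ^ 2),
    by positivity, fun δ hδ hδ₀ σ hdiff hσ0 hineq x hx => ?_⟩
  have hKδ : K * δ ≤ a / 2 := by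
    rw [le_div_iff₀ (by positivity)] at hδ₀
    nlinarith
  have hlower := div_one_add_mul_le_riccati hK hKδ hineq hdiff hσ0 (b := 2 * a)
    (by positivity) hδ (by linarith) x hx
  have hupper := riccati_le_div_one_add_mul hK hKδ hineq hdiff hσ0 (b := a / 4)
    (by positivity) hδ (by linarith) x hx
  have hpos := (div_one_add_mul_pos (by positivity) hδ hx).trans_le hlower
  have hσC₁ : σ x ≤ C₁ * δ / (1 + δ * x) :=
    hupper.trans (div_one_add_mul_le_mul_div (by positivity) hδ hx hC₁ hC₁a)
  have hderiv := riccati_deriv_bounds_of_le hK hKδ hineq hx hpos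
    (hupper.trans (div_one_add_mul_le_self (by positivity) hδ hx))
  refine ⟨hpos, (mul_div_le_div_one_add_mul (by positivity) hδ hx hc1 hca).trans hlower,
    hσC₁.trans (by gcongr; exact le_max_left _ _), ?_⟩
  calc |deriv σ x| ≤ 3 * a / 2 * σ x ^ 2 :=
        abs_le.2 ⟨by linarith [hderiv.1], by nlinarith [hderiv.2]⟩
    _ ≤ 3 * a / 2 * (C₁ * δ / (1 + δ * x)) ^ 2 := by gcongr
    _ = 3 * a / 2 * C₁ ^ 2 * δ ^ 2 / (1 + δ * x) ^ 2 := by rw [div_pow]; ring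
    _ ≤ max C₁ (3 * a / 2 * C₁ ^ 2) * δ ^ 2 / (1 + δ * x) ^ 2 := by
      gcongr; exact le_max_right _ _
end
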